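/- arXiv:2111.12426 — 6 statements merged into one kernel-verified Lean document; each statement's English description precedes it below -/
import Mathlib

section
/- Let λ be a partition inside an n×k rectangle and set a_i = λ_i + n - i for 1 ≤ i ≤ n. Then the determinant of q-binomial coefficients det[ qbinom(k+i, j+λ_{n-j})_q ]_{i,j=0}^{n-1} equals q^{‖λ̄‖} · (∏_{m=0}^{n-1} [k+m]_q!) · (∏_{1≤i<j≤n} [a_i - a_j]_q) / (∏_{i=1}^{n} [a_i]_q! · [k+n-1-a_i]_q!), where ‖λ̄‖ = Σ_{i=1}^{n} (i-1)·(k - λ_{n+1-i}) is the weighted size of the complement partition. -/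
/-!
Write `b_j = j + λ_{n-j}`, a weakly increasing sequence with `b_j ≤ k + j`. Scaling row `i` by
`(q - 1)^{n-1-i}` and column `j` by `[b_j]! [k+n-1-b_j]! q^{(n-1) b_j}` turns the entry into
`[k+i]! · z_j^i ∏_{i<s<n} (q^{k+s} - z_j)` with `z_j = q^{b_j}`; when `b_j > k + i` both sides
vanish, the product through its factor `s = b_j - k`. These are the values at the `z_j` of
polynomials `X^i ∏_{s>i} (c_s - X)` of degree `< n` whose coefficient matrix is triangular, so the
determinant is a product of the `c_s` times the Vandermonde determinant
`∏_{i<j} (q^{b_j} - q^{b_i}) = ∏_{i<j} q^{b_i} (q - 1) [b_j - b_i]`; the remaining powers of `q`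
collect into `q^{Σ_j j (k + j - b_j)} = q^{‖λ̄‖}`.
-/

open Finset

noncomputable section

/-- The generic variable `q`, as a rational function over `ℚ`. -/
def q : RatFunc ℚ := RatFunc.X

/-- The `q`-integer `[m]_q = 1 + q + ⋯ + q^{m-1}`. -/
def qint (m : ℕ) : RatFunc ℚ := ∑ i ∈ Finset.range m, q ^ i

/-- The `q`-factorial `[m]_q!`. -/
def qfact (m : ℕ) : RatFunc ℚ := ∏ i ∈ Finset.range m, qint (i + 1)

/-- The Gaussian binomial coefficient, `0` outside the valid range. -/
def qbinom (a b : ℕ) : RatFunc ℚ :=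
  if b ≤ a then qfact a / (qfact b * qfact (a - b)) else 0

lemma qint_mul_q_sub_one (m : ℕ) : qint m * (q - 1) = q ^ m - 1 := geom_sum_mul q m

lemma q_pow_sub_one_ne_zero {m : ℕ} (hm : m ≠ 0) : q ^ m - 1 ≠ 0 := by
  have h : q ^ m - 1
      = algebraMap (Polynomial ℚ) (RatFunc ℚ) (Polynomial.X ^ m - Polynomial.C 1) := by
    simp [q]
  rw [h]
  exact RatFunc.algebraMap_ne_zero (Polynomial.X_pow_sub_C_ne_zero (Nat.pos_of_ne_zero hm) 1)

lemma q_sub_one_ne_zero : q - 1 ≠ 0 := by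
  simpa using q_pow_sub_one_ne_zero one_ne_zero

lemma qint_ne_zero {m : ℕ} (hm : m ≠ 0) : qint m ≠ 0 :=
  left_ne_zero_of_mul (qint_mul_q_sub_one m ▸ q_pow_sub_one_ne_zero hm)

lemma qfact_ne_zero (m : ℕ) : qfact m ≠ 0 :=
  prod_ne_zero_iff.mpr fun i _ => qint_ne_zero i.succ_ne_zero

lemma qfact_succ (m : ℕ) : qfact (m + 1) = qfact m * qint (m + 1) :=
  prod_range_succ _ m

lemma q_pow_sub_q_pow {b s : ℕ} (h : b ≤ s) :
    q ^ s - q ^ b = q ^ b * (q - 1) * qint (s - b) := by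
  rw [mul_assoc, mul_comm (q - 1), qint_mul_q_sub_one, mul_sub, mul_one, ← pow_add,
    Nat.add_sub_cancel' h]

lemma qfact_sub_mul_prod_Ioc {a b m : ℕ} (hba : b ≤ a) (ham : a ≤ m) :
    qfact (a - b) * ∏ s ∈ Ioc a m, (q ^ s - q ^ b)
      = qfact (m - b) * (q ^ b * (q - 1)) ^ (m - a) := by
  induction m, ham using Nat.le_induction with
  | base => simp
  | succ m ham ih =>
    rw [prod_Ioc_succ_top ham, ← mul_assoc, ih, q_pow_sub_q_pow (by omega),
      show m + 1 - b = m - b + 1 by omega, show m + 1 - a = m - a + 1 by omega, qfact_succ]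
    ring

lemma qbinom_mul_qfact_mul {a b m : ℕ} (ham : a ≤ m) (hbm : b ≤ m) :
    qbinom a b * (qfact b * qfact (m - b)) * (q ^ b * (q - 1)) ^ (m - a)
      = qfact a * ∏ s ∈ Ioc a m, (q ^ s - q ^ b) := by
  by_cases hba : b ≤ a
  · rw [qbinom, if_pos hba, mul_assoc, mul_assoc, ← qfact_sub_mul_prod_Ioc hba ham]
    have hb := qfact_ne_zero b
    have hab := qfact_ne_zero (a - b)
    field_simp
  · rw [qbinom, if_neg hba, prod_eq_zero (i := b) (by simp only [mem_Ioc]; omega) (sub_self _)]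
    simp

open Polynomial in
theorem Matrix.det_eval_eq_prod_coeff_mul_det_vandermonde {R : Type*} [CommRing R] {n : ℕ}
    (p : Fin n → R[X]) (z : Fin n → R) (hdeg : ∀ i, (p i).natDegree < n)
    (hlow : ∀ (i : Fin n) (m : ℕ), m < i → (p i).coeff m = 0) :
    det (of fun i j => (p i).eval (z j)) = (∏ i, (p i).coeff i) * det (vandermonde z) := by
  have hfactor : of (fun i j => (p i).eval (z j))
      = of (fun i m : Fin n => (p i).coeff m) * (vandermonde z).transpose := by
    ext i j
    rw [mul_apply, of_apply, eval_eq_sum_range' (hdeg i), ← Fin.sum_univ_eq_sum_range]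
    simp [vandermonde]
  have htri : (of fun i m : Fin n => (p i).coeff m).IsUpperTriangular :=
    fun i m hmi => hlow i m hmi
  rw [hfactor, det_mul, det_of_isUpperTriangular htri, det_transpose]
  rfl

open Polynomial in
theorem Matrix.det_pow_mul_prod_sub {R : Type*} [CommRing R] {n : ℕ} (c : ℕ → R)
    (z : Fin n → R) :
    det (of fun i j : Fin n => z j ^ (i : ℕ) * ∏ s ∈ Ico ((i : ℕ) + 1) n, (c s - z j))
      = (∏ i : Fin n, ∏ s ∈ Ico ((i : ℕ) + 1) n, c s)
        * ∏ i, ∏ j ∈ Ioi i, (z j - z i) := by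
  let p : Fin n → R[X] := fun i => X ^ (i : ℕ) * ∏ s ∈ Ico ((i : ℕ) + 1) n, (C (c s) - X)
  have hdeg (i : Fin n) : (p i).natDegree < n := by
    have hprod : (∏ s ∈ Ico ((i : ℕ) + 1) n, (C (c s) - X)).natDegree ≤ n - (i + 1) := by
      refine (natDegree_prod_le _ _).trans ((sum_le_card_nsmul _ _ 1 fun s _ => ?_).trans ?_)
      · exact (natDegree_sub_le _ _).trans (by simpa using natDegree_X_le)
      · simp
    have := (natDegree_mul_le (p := X ^ (i : ℕ))).trans (add_le_add (natDegree_X_pow_le _) hprod)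
    exact this.trans_lt (by omega)
  have hcoeff (i : Fin n) (m : ℕ) : (p i).coeff m = if (i : ℕ) ≤ m
      then (∏ s ∈ Ico ((i : ℕ) + 1) n, (C (c s) - X)).coeff (m - i) else 0 :=
    coeff_X_pow_mul' _ _ _
  have h := det_eval_eq_prod_coeff_mul_det_vandermonde p z hdeg
    fun i m hm => by rw [hcoeff, if_neg (by omega)]
  simp only [p, eval_mul, eval_pow, eval_X, eval_prod, eval_sub, eval_C] at h
  rw [h, det_vandermonde]
  congr 1
  refine prod_congr rfl fun i _ => ?_
  rw [hcoeff, if_pos le_rfl, Nat.sub_self, coeff_zero_eq_eval_zero, eval_prod]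
  simp

theorem Fin.prod_prod_Ioi_rev {M : Type*} [CommMonoid M] {n : ℕ} (f : Fin n → Fin n → M) :
    ∏ i, ∏ j ∈ Ioi i, f i j = ∏ i : Fin n, ∏ j ∈ Ioi i, f j.rev i.rev := by
  rw [prod_sigma', prod_sigma']
  exact prod_nbij' (fun p : Σ _ : Fin n, Fin n => ⟨p.2.rev, p.1.rev⟩)
    (fun p : Σ _ : Fin n, Fin n => ⟨p.2.rev, p.1.rev⟩)
    (by simp) (by simp) (by simp) (by simp) (by simp)

theorem Finset.prod_range_prod_Ico_eq_prod_pow {M : Type*} [CommMonoid M] (f : ℕ → M)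
    (n : ℕ) :
    ∏ i ∈ range n, ∏ s ∈ Ico (i + 1) n, f s = ∏ s ∈ range n, f s ^ s := by
  induction n with
  | zero => simp
  | succ n ih =>
    have hstep : ∀ i ∈ range n,
        ∏ s ∈ Ico (i + 1) (n + 1), f s = (∏ s ∈ Ico (i + 1) n, f s) * f n :=
      fun i hi => prod_Ico_succ_top (mem_range.mp hi) f
    rw [prod_range_succ, prod_range_succ, prod_congr rfl hstep, prod_mul_distrib, ih, prod_const,
      card_range, Ico_self, prod_empty, mul_one]

lemma prod_q_pow_sub_q_pow {n : ℕ} {b : Fin n → ℕ} (hb : Monotone b) :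
    ∏ i, ∏ j ∈ Ioi i, (q ^ b j - q ^ b i)
      = (∏ i, (q ^ b i * (q - 1)) ^ (n - 1 - i)) * ∏ i, ∏ j ∈ Ioi i, qint (b j - b i) := by
  rw [← prod_mul_distrib]
  refine prod_congr rfl fun i _ => ?_
  rw [prod_congr rfl fun j hj => q_pow_sub_q_pow (hb (mem_Ioi.mp hj).le), prod_mul_distrib,
    prod_const, Fin.card_Ioi]

lemma scaled_qbinom_eq {n k i b : ℕ} (hi : i < n) (hb : b ≤ k + n - 1) :
    (q - 1) ^ (n - 1 - i)
        * (qfact b * qfact (k + n - 1 - b) * (q ^ b) ^ (n - 1) * qbinom (k + i) b)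
      = qfact (k + i) * ((q ^ b) ^ i * ∏ s ∈ Ico (i + 1) n, (q ^ (k + s) - q ^ b)) := by
  have h := qbinom_mul_qfact_mul (a := k + i) (b := b) (m := k + n - 1) (by omega) hb
  have hIoc : ∏ s ∈ Ico (i + 1) n, (q ^ (k + s) - q ^ b)
      = ∏ s ∈ Ioc (k + i) (k + n - 1), (q ^ s - q ^ b) := by
    rw [prod_Ico_add (fun s => q ^ s - q ^ b)]
    congr 1
    ext s
    simp only [mem_Ico, mem_Ioc]
    omega
  have hpow : (q ^ b) ^ (n - 1) = (q ^ b) ^ i * (q ^ b) ^ (n - 1 - i) := by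
    rw [← pow_add]
    congr 1
    omega
  rw [show k + n - 1 - (k + i) = n - 1 - i by omega, mul_pow] at h
  rw [hIoc]
  linear_combination (q ^ b) ^ i * h
    + (q - 1) ^ (n - 1 - i) * qfact b * qfact (k + n - 1 - b) * qbinom (k + i) b * hpow

open Matrix in
lemma prod_mul_prod_mul_det_qbinom (n k : ℕ) (b : Fin n → ℕ) (hb : Monotone b)
    (hbk : ∀ j, b j ≤ k + n - 1) :
    (∏ i : Fin n, (q - 1) ^ (n - 1 - (i : ℕ)))
        * ((∏ j, qfact (b j) * qfact (k + n - 1 - b j) * (q ^ b j) ^ (n - 1))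
          * det (of fun i j : Fin n => qbinom (k + i) (b j)))
      = (∏ i : Fin n, qfact (k + i)) * ((∏ i : Fin n, (q ^ (k + (i : ℕ))) ^ (i : ℕ))
          * ((∏ i, (q ^ b i * (q - 1)) ^ (n - 1 - (i : ℕ)))
            * ∏ i, ∏ j ∈ Ioi i, qint (b j - b i))) := by
  have hentries : (of fun i j : Fin n => (q - 1) ^ (n - 1 - (i : ℕ))
        * (qfact (b j) * qfact (k + n - 1 - b j) * (q ^ b j) ^ (n - 1) * qbinom (k + i) (b j)))
      = of fun i j : Fin n => qfact (k + i)
          * ((q ^ b j) ^ (i : ℕ) * ∏ s ∈ Ico ((i : ℕ) + 1) n, (q ^ (k + s) - q ^ b j)) := by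
    ext i j
    exact scaled_qbinom_eq i.isLt (hbk j)
  have hrows := det_mul_column (fun i : Fin n => qfact (k + i)) (of fun i j : Fin n =>
    (q ^ b j) ^ (i : ℕ) * ∏ s ∈ Ico ((i : ℕ) + 1) n, (q ^ (k + s) - q ^ b j))
  have hc : ∏ i : Fin n, ∏ s ∈ Ico ((i : ℕ) + 1) n, q ^ (k + s)
      = ∏ i : Fin n, (q ^ (k + (i : ℕ))) ^ (i : ℕ) := by
    rw [Fin.prod_univ_eq_prod_range (fun i => ∏ s ∈ Ico (i + 1) n, q ^ (k + s)),
      prod_range_prod_Ico_eq_prod_pow, Fin.prod_univ_eq_prod_range (fun i => (q ^ (k + i)) ^ i)]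
  rw [← det_mul_row, ← det_mul_column]
  simp only [of_apply] at hrows ⊢
  rw [hentries, hrows, det_pow_mul_prod_sub (fun s => q ^ (k + s)) (fun j => q ^ b j), hc,
    prod_q_pow_sub_q_pow hb]

open Matrix in
theorem det_qbinom_mul_prod_qfact (n k : ℕ) (b : Fin n → ℕ) (hb : Monotone b)
    (hbk : ∀ i, b i ≤ k + i) :
    det (of fun i j : Fin n => qbinom (k + i) (b j))
        * ∏ j, (qfact (b j) * qfact (k + n - 1 - b j))
      = q ^ (∑ i : Fin n, (i : ℕ) * (k + i - b i)) * (∏ i : Fin n, qfact (k + i))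
        * ∏ i, ∏ j ∈ Ioi i, qint (b j - b i) := by
  have hscaled := prod_mul_prod_mul_det_qbinom n k b hb fun j => (hbk j).trans (by omega)
  have hexp :
      (∏ i : Fin n, (q ^ (k + (i : ℕ))) ^ (i : ℕ)) * ∏ i, (q ^ b i) ^ (n - 1 - (i : ℕ))
      = q ^ (∑ i : Fin n, (i : ℕ) * (k + i - b i)) * ∏ i, (q ^ b i) ^ (n - 1) := by
    rw [← prod_pow_eq_pow_sum, ← prod_mul_distrib, ← prod_mul_distrib]
    refine prod_congr rfl fun i _ => ?_
    obtain ⟨x, hx⟩ : ∃ x, k + (i : ℕ) = b i + x :=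
      ⟨k + i - b i, (Nat.add_sub_of_le (hbk i)).symm⟩
    obtain ⟨d, hd⟩ : ∃ d, n - 1 = (i : ℕ) + d := ⟨n - 1 - i, by omega⟩
    rw [hx, hd, Nat.add_sub_cancel_left, Nat.add_sub_cancel_left]
    ring
  have hr : (∏ i : Fin n, (q - 1) ^ (n - 1 - (i : ℕ))) * ∏ i, (q ^ b i) ^ (n - 1) ≠ 0 :=
    mul_ne_zero (prod_ne_zero_iff.mpr fun i _ => pow_ne_zero _ q_sub_one_ne_zero)
      (prod_ne_zero_iff.mpr fun i _ => pow_ne_zero _ (pow_ne_zero _ RatFunc.X_ne_zero))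
  simp only [prod_mul_distrib, mul_pow] at hscaled ⊢
  apply mul_left_cancel₀ hr
  linear_combination hscaled
    + (∏ i : Fin n, qfact (k + i)) * (∏ i : Fin n, (q - 1) ^ (n - 1 - (i : ℕ)))
      * (∏ i, ∏ j ∈ Ioi i, qint (b j - b i)) * hexp

/-- `l i = λ_{i+1}` is the partition indexed from `0`, so `a_{i+1} = l i + (n - 1 - i)`. -/
theorem stmt1 (n k : ℕ) (l : Fin n → ℕ)
    (hl : ∀ i j : Fin n, i ≤ j → l j ≤ l i) (hbd : ∀ i, l i ≤ k) :
    Matrix.det (Matrix.of fun i j : Fin n => qbinom (k + (i : ℕ)) ((j : ℕ) + l j.rev))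
      = q ^ (∑ i : Fin n, (i : ℕ) * (k - l i.rev))
        * (∏ m ∈ Finset.range n, qfact (k + m))
        * (∏ i : Fin n, ∏ j ∈ Finset.Ioi i,
            qint ((l i + (n - 1 - (i : ℕ))) - (l j + (n - 1 - (j : ℕ)))))
        / (∏ i : Fin n,
            qfact (l i + (n - 1 - (i : ℕ)))
              * qfact (k + n - 1 - (l i + (n - 1 - (i : ℕ))))) := by
  let b : Fin n → ℕ := fun j => j + l j.rev
  have hb : Monotone b := fun i j hij => add_le_add hij (hl _ _ (Fin.rev_le_rev.mpr hij))
  have hbk (i : Fin n) : b i ≤ k + i := by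
    have := hbd i.rev
    simp only [b]
    omega
  have hb_rev (i : Fin n) : b i.rev = l i + (n - 1 - i) := by
    simp only [b, Fin.val_rev, Fin.rev_rev]
    omega
  have h := det_qbinom_mul_prod_qfact n k b hb hbk
  rw [← Equiv.prod_comp Fin.revPerm fun j => qfact (b j) * qfact (k + n - 1 - b j),
    Fin.prod_prod_Ioi_rev, Fin.prod_univ_eq_prod_range (fun m => qfact (k + m))] at h
  simp only [Fin.revPerm_apply, hb_rev] at h
  rw [eq_div_iff (prod_ne_zero_iff.mpr fun i _ => mul_ne_zero (qfact_ne_zero _) (qfact_ne_zero _))]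
  convert h using 4
  refine sum_congr rfl fun i _ => congrArg _ ?_
  simp only [b]
  omega

end
end

section
/- Let λ be a partition inside an n×k rectangle and let λ̄ be its complement in the rectangle, i.e., λ̄_i = k - λ_{n+1-i}. Then det[ C(k+i, j+λ_{n-j}) ]_{i,j=0}^{n-1} = det[ C(k+i, j+λ̄_{n-j}) ]_{i,j=0}^{n-1}, where C denotes the binomial coefficient. -/
open Finset

/-!
Vandermonde's identity `C(k+i, m) = ∑ₛ C(i, s) C(k, m - s)` factors the matrix `(C(k+i, m_j))`
as the unitriangular Pascal matrix `(C(i, s))` times `(C(k, m_j - i))`, so only the latter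
matters. Reversing the order of both rows and columns and applying `C(k, z) = C(k, k - z)`
entrywise carries this matrix for `λ` to the one for `λ̄`.
-/

def chooseInt (n : ℕ) (z : ℤ) : ℤ := if 0 ≤ z then (n.choose z.toNat : ℤ) else 0

@[simp]
lemma chooseInt_natCast (n m : ℕ) : chooseInt n m = n.choose m := by
  simp [chooseInt]

lemma chooseInt_natCast_sub (n m s : ℕ) :
    chooseInt n ((m : ℤ) - s) = if s ≤ m then (n.choose (m - s) : ℤ) else 0 := by
  split_ifs with h
  · rw [← Nat.cast_sub h, chooseInt_natCast]
  · rw [chooseInt, if_neg (by omega)]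

lemma chooseInt_symm (n : ℕ) (z : ℤ) : chooseInt n z = chooseInt n (n - z) := by
  unfold chooseInt
  split_ifs with h₁ h₂ h₂
  · rw [show ((n : ℤ) - z).toNat = n - z.toNat by omega, Nat.choose_symm (by omega)]
  · simp [Nat.choose_eq_zero_of_lt (show n < z.toNat by omega)]
  · simp [Nat.choose_eq_zero_of_lt (show n < ((n : ℤ) - z).toNat by omega)]
  · rfl

lemma add_choose_eq_sum_chooseInt {i N : ℕ} (hi : i < N) (k m : ℕ) :
    ((k + i).choose m : ℤ) = ∑ s ∈ range N, (i.choose s : ℤ) * chooseInt k ((m : ℤ) - s) := by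
  set f : ℕ → ℤ := fun s => (i.choose s : ℤ) * chooseInt k ((m : ℤ) - s)
  have hf : ∀ s, (i < s ∨ m < s) → f s = 0 := by
    rintro s (hs | hs)
    · simp [f, Nat.choose_eq_zero_of_lt hs]
    · simp [f, chooseInt_natCast_sub, show ¬ s ≤ m by omega]
  calc ((k + i).choose m : ℤ)
      = ∑ s ∈ range (m + 1), f s := by
        rw [add_comm, Nat.add_choose_eq, Finset.Nat.sum_antidiagonal_eq_sum_range_succ_mk]
        push_cast
        refine sum_congr rfl fun s hs => ?_
        simp [f, chooseInt_natCast_sub, show s ≤ m by simp at hs; omega]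
    _ = ∑ s ∈ range (N + m + 1), f s :=
        (eventually_constant_sum (fun s hs => hf s (by omega)) (by omega)).symm
    _ = ∑ s ∈ range N, f s := eventually_constant_sum (fun s hs => hf s (by omega)) (by omega)

lemma det_pascal (R : Type*) [CommRing R] (n : ℕ) :
    (Matrix.of fun i j : Fin n => ((i : ℕ).choose j : R)).det = 1 := by
  rw [Matrix.det_of_isLowerTriangular]
  · simp
  · intro i j (h : i < j)
    simp [Nat.choose_eq_zero_of_lt h]

lemma det_add_choose_eq_det_chooseInt (n k : ℕ) (m : Fin n → ℕ) :
    (Matrix.of fun i j : Fin n => ((k + i).choose (m j) : ℤ)).det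
      = (Matrix.of fun i j : Fin n => chooseInt k ((m j : ℤ) - i)).det := by
  have hfactor : (Matrix.of fun i j : Fin n => ((k + i).choose (m j) : ℤ))
      = Matrix.of (fun i s : Fin n => ((i : ℕ).choose s : ℤ))
        * Matrix.of fun i j : Fin n => chooseInt k ((m j : ℤ) - i) := by
    ext i j
    rw [Matrix.of_apply, add_choose_eq_sum_chooseInt i.isLt, ← Fin.sum_univ_eq_sum_range]
    rfl
  rw [hfactor, Matrix.det_mul, det_pascal, one_mul]

theorem stmt2_general (n k : ℕ) (l : Fin n → ℕ)
    (hbd : ∀ i, l i ≤ k) :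
    Matrix.det (Matrix.of fun i j : Fin n =>
        (((k + (i : ℕ)).choose ((j : ℕ) + l j.rev)) : ℤ))
      = Matrix.det (Matrix.of fun i j : Fin n =>
        (((k + (i : ℕ)).choose ((j : ℕ) + (k - l j))) : ℤ)) := by
  rw [det_add_choose_eq_det_chooseInt n k (fun j => j + l j.rev),
    det_add_choose_eq_det_chooseInt n k (fun j => j + (k - l j)),
    ← Matrix.det_submatrix_equiv_self Fin.revPerm]
  congr 1
  ext i j
  simp only [Matrix.submatrix_apply, Matrix.of_apply, Fin.revPerm_apply, Fin.rev_rev]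
  rw [chooseInt_symm]
  have := hbd j
  congr 1
  push_cast [Fin.val_rev]
  omega

/-- For a partition `λ` inside an `n × k` rectangle (`l i = λ_{i+1}`, `0`-indexed),
with complement `λ̄_i = k - λ_{n+1-i}` (so that `λ̄_{n-j} = k - λ_{j+1} = k - l j`),
the multiplicity determinants of `λ` and `λ̄` agree:
`det[ C(k+i, j+λ_{n-j}) ] = det[ C(k+i, j+λ̄_{n-j}) ]`. -/
theorem stmt2 (n k : ℕ) (l : Fin n → ℕ)
    (hl : ∀ i j : Fin n, i ≤ j → l j ≤ l i) (hbd : ∀ i, l i ≤ k) :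
    Matrix.det (Matrix.of fun i j : Fin n =>
        (((k + (i : ℕ)).choose ((j : ℕ) + l j.rev)) : ℤ))
      = Matrix.det (Matrix.of fun i j : Fin n =>
        (((k + (i : ℕ)).choose ((j : ℕ) + (k - l j))) : ℤ)) :=
  stmt2_general n k l hbd
end

section
/- The number of directed lattice paths from (0,0) to (x,y) with x ≥ y ≥ 0, using east steps (i,j)→(i+1,j) and north steps (i,j)→(i,j+1), constrained to stay weakly below the diagonal y = x, where each north step that ends on the diagonal (i.e., from (i,i-1) to (i,i)) comes in two distinguishable colors, equals the binomial coefficient C(x+y, y). -/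
open Finset

/-- In a word `w` of steps (`0` = east, `1` = plain north, `2` = colored north),
the number of east steps among the first `m` steps. -/
def ecount {L : ℕ} (w : Fin L → Fin 3) (m : ℕ) : ℕ :=
  (Finset.univ.filter (fun s : Fin L => (s : ℕ) < m ∧ w s = 0)).card

/-- The number of north steps among the first `m` steps. -/
def ncount {L : ℕ} (w : Fin L → Fin 3) (m : ℕ) : ℕ :=
  (Finset.univ.filter (fun s : Fin L => (s : ℕ) < m ∧ w s ≠ 0)).card

lemma ecount_snoc {n : ℕ} (w : Fin n → Fin 3) (c : Fin 3) (m : ℕ) :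
    ecount (Fin.snoc w c) m = ecount w m + if n < m ∧ c = 0 then 1 else 0 := by
  unfold ecount
  rw [Finset.card_filter, Finset.card_filter, Fin.sum_univ_castSucc]
  simp [Fin.snoc_castSucc, Fin.snoc_last]

lemma ncount_snoc {n : ℕ} (w : Fin n → Fin 3) (c : Fin 3) (m : ℕ) :
    ncount (Fin.snoc w c) m = ncount w m + if n < m ∧ c ≠ 0 then 1 else 0 := by
  unfold ncount
  rw [Finset.card_filter, Finset.card_filter, Fin.sum_univ_castSucc]
  simp [Fin.snoc_castSucc, Fin.snoc_last]

lemma ecount_stable {L : ℕ} (w : Fin L → Fin 3) {m : ℕ} (h : L ≤ m) :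
    ecount w m = ecount w L := by
  unfold ecount
  congr 1
  apply Finset.filter_congr
  intro s _
  simp [s.is_lt, Nat.lt_of_lt_of_le s.is_lt h]

lemma ncount_stable {L : ℕ} (w : Fin L → Fin 3) {m : ℕ} (h : L ≤ m) :
    ncount w m = ncount w L := by
  unfold ncount
  congr 1
  apply Finset.filter_congr
  intro s _
  simp [s.is_lt, Nat.lt_of_lt_of_le s.is_lt h]

lemma ecount_add_ncount {L : ℕ} (w : Fin L → Fin 3) : ecount w L + ncount w L = L := by
  unfold ecount ncount
  simp only [Fin.is_lt, true_and]
  rw [Finset.card_filter_add_card_filter_not]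
  simp

def Q (L x y : ℕ) (w : Fin L → Fin 3) : Prop :=
  ecount w L = x ∧ ncount w L = y ∧
  (∀ m : ℕ, m ≤ L → ncount w m ≤ ecount w m) ∧
  (∀ t : Fin L, w t = 2 → ncount w ((t : ℕ) + 1) = ecount w ((t : ℕ) + 1))

/-- appending a north step -/
lemma Q_snoc_n {n x y : ℕ} (w : Fin n → Fin 3) (c : Fin 3) (hc0 : c ≠ 0)
    (hxy : y + 1 ≤ x) (hcol : c = 2 → y + 1 = x)
    (h : Q n x y w) : Q (n + 1) x (y + 1) (Fin.snoc w c) := by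
  obtain ⟨he, hn, hpre, hcol'⟩ := h
  refine ⟨?_, ?_, ?_, ?_⟩
  · rw [ecount_snoc]; simp [hc0, ecount_stable w (Nat.le_succ n), he]
  · rw [ncount_snoc]; simp [hc0, ncount_stable w (Nat.le_succ n), hn]
  · intro m hm
    rcases Nat.lt_or_ge m (n + 1) with h1 | h1
    · rw [ecount_snoc, ncount_snoc]
      have h2 : ¬ n < m := by omega
      simp only [h2, false_and, if_false, add_zero]
      exact hpre m (by omega)
    · have hm' : m = n + 1 := by omega
      subst hm'
      rw [ecount_snoc, ncount_snoc]
      simp [hc0, ecount_stable w (Nat.le_succ n), ncount_stable w (Nat.le_succ n), he, hn]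
      omega
  · intro t ht
    rcases Fin.eq_castSucc_or_eq_last t with ⟨s, rfl⟩ | rfl
    · rw [Fin.snoc_castSucc] at ht
      have hs := hcol' s ht
      rw [ecount_snoc, ncount_snoc]
      have h2 : ¬ n < (s : ℕ) + 1 := by have := s.is_lt; omega
      simp only [Fin.coe_castSucc, h2, false_and, if_false, add_zero]
      exact hs
    · rw [Fin.snoc_last] at ht
      have hy : y + 1 = x := hcol ht
      rw [ecount_snoc, ncount_snoc]
      simp [hc0, Fin.val_last, ecount_stable w (Nat.le_succ n),
        ncount_stable w (Nat.le_succ n), he, hn]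
      omega

/-- appending an east step -/
lemma Q_snoc_e {n x y : ℕ} (w : Fin n → Fin 3)
    (hxy : y ≤ x + 1)
    (h : Q n x y w) : Q (n + 1) (x + 1) y (Fin.snoc w 0) := by
  obtain ⟨he, hn, hpre, hcol'⟩ := h
  refine ⟨?_, ?_, ?_, ?_⟩
  · rw [ecount_snoc]; simp [ecount_stable w (Nat.le_succ n), he]
  · rw [ncount_snoc]; simp [ncount_stable w (Nat.le_succ n), hn]
  · intro m hm
    rcases Nat.lt_or_ge m (n + 1) with h1 | h1
    · rw [ecount_snoc, ncount_snoc]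
      have h2 : ¬ n < m := by omega
      simp only [h2, false_and, if_false, add_zero]
      exact hpre m (by omega)
    · have hm' : m = n + 1 := by omega
      subst hm'
      rw [ecount_snoc, ncount_snoc]
      simp [ecount_stable w (Nat.le_succ n), ncount_stable w (Nat.le_succ n), he, hn]
      omega
  · intro t ht
    rcases Fin.eq_castSucc_or_eq_last t with ⟨s, rfl⟩ | rfl
    · rw [Fin.snoc_castSucc] at ht
      have hs := hcol' s ht
      rw [ecount_snoc, ncount_snoc]
      have h2 : ¬ n < (s : ℕ) + 1 := by have := s.is_lt; omega
      simp only [Fin.coe_castSucc, h2, false_and, if_false, add_zero]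
      exact hs
    · rw [Fin.snoc_last] at ht
      exact absurd ht (by decide)

lemma Q_init_e {n x y : ℕ} (w : Fin (n + 1) → Fin 3) (hl : w (Fin.last n) = 0)
    (h : Q (n + 1) x y w) : 1 ≤ x ∧ Q n (x - 1) y (Fin.init w) := by
  have hw : Fin.snoc (Fin.init w) 0 = w := by rw [← hl]; exact Fin.snoc_init_self w
  rw [← hw] at h
  obtain ⟨he, hn, hpre, hcol'⟩ := h
  rw [ecount_snoc] at he
  rw [ncount_snoc] at hn
  simp [ecount_stable (Fin.init w) (Nat.le_succ n)] at he
  simp [ncount_stable (Fin.init w) (Nat.le_succ n)] at hn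
  refine ⟨by omega, by omega, hn, ?_, ?_⟩
  · intro m hm
    have := hpre m (by omega)
    rw [ecount_snoc, ncount_snoc] at this
    have h2 : ¬ n < m := by omega
    simpa [h2] using this
  · intro t ht
    have ht' : Fin.snoc (Fin.init w) (0 : Fin 3) (Fin.castSucc t) = 2 := by
      rw [Fin.snoc_castSucc]; exact ht
    have := hcol' (Fin.castSucc t) ht'
    rw [ecount_snoc, ncount_snoc] at this
    have h2 : ¬ n < (t : ℕ) + 1 := by have := t.is_lt; omega
    simpa [h2] using this

lemma Q_init_n {n x y : ℕ} (w : Fin (n + 1) → Fin 3) (hl : w (Fin.last n) ≠ 0)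
    (h : Q (n + 1) x y w) : 1 ≤ y ∧ Q n x (y - 1) (Fin.init w) := by
  have hw : Fin.snoc (Fin.init w) (w (Fin.last n)) = w := Fin.snoc_init_self w
  rw [← hw] at h
  obtain ⟨he, hn, hpre, hcol'⟩ := h
  rw [ecount_snoc] at he
  rw [ncount_snoc] at hn
  simp [hl, ecount_stable (Fin.init w) (Nat.le_succ n)] at he
  simp [hl, ncount_stable (Fin.init w) (Nat.le_succ n)] at hn
  refine ⟨by omega, he, by omega, ?_, ?_⟩
  · intro m hm
    have := hpre m (by omega)
    rw [ecount_snoc, ncount_snoc] at this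
    have h2 : ¬ n < m := by omega
    simpa [h2] using this
  · intro t ht
    have ht' : Fin.snoc (Fin.init w) (w (Fin.last n)) (Fin.castSucc t) = 2 := by
      rw [Fin.snoc_castSucc]; exact ht
    have := hcol' (Fin.castSucc t) ht'
    rw [ecount_snoc, ncount_snoc] at this
    have h2 : ¬ n < (t : ℕ) + 1 := by have := t.is_lt; omega
    simpa [h2] using this

lemma Q_last_two {n x y : ℕ} {w : Fin (n + 1) → Fin 3} (h : Q (n + 1) x y w)
    (hl : w (Fin.last n) = 2) : y = x := by
  have := h.2.2.2 (Fin.last n) hl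
  rw [Fin.val_last] at this
  rw [h.1, h.2.1] at this
  exact this

lemma card_step_lt {n x y : ℕ} (hlt : y + 1 ≤ x) :
    Nat.card {w : Fin (n + 1) → Fin 3 // Q (n + 1) (x + 1) (y + 1) w}
      = Nat.card {w : Fin n → Fin 3 // Q n x (y + 1) w}
        + Nat.card {w : Fin n → Fin 3 // Q n (x + 1) y w} := by
  rw [← Nat.card_sum]
  refine (Nat.card_eq_of_bijective (fun z =>
    match z with
    | .inl ⟨w, hw⟩ => ⟨Fin.snoc w 0, Q_snoc_e w (by omega) hw⟩
    | .inr ⟨w, hw⟩ => ⟨Fin.snoc w 1,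
        Q_snoc_n w 1 (by decide) (by omega) (fun h => absurd h (by decide)) hw⟩) ⟨?_, ?_⟩).symm
  · rintro (⟨w1, h1⟩ | ⟨w1, h1⟩) (⟨w2, h2⟩ | ⟨w2, h2⟩) hab <;>
      simp only [Subtype.mk.injEq] at hab
    · have := congrArg Fin.init hab
      simp only [Fin.init_snoc] at this
      simp [this]
    · have := congrFun hab (Fin.last n)
      simp only [Fin.snoc_last] at this
      exact absurd this (by decide)
    · have := congrFun hab (Fin.last n)
      simp only [Fin.snoc_last] at this
      exact absurd this (by decide)
    · have := congrArg Fin.init hab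
      simp only [Fin.init_snoc] at this
      simp [this]
  · rintro ⟨w, hw⟩
    have h3 : (w (Fin.last n) : ℕ) = 0 ∨ (w (Fin.last n) : ℕ) = 1 ∨
        (w (Fin.last n) : ℕ) = 2 := by have := (w (Fin.last n)).is_lt; omega
    rcases h3 with h0 | h1 | h2
    · have hl : w (Fin.last n) = 0 := Fin.ext h0
      obtain ⟨hx1, hQ⟩ := Q_init_e w hl hw
      rw [Nat.add_sub_cancel] at hQ
      exact ⟨.inl ⟨Fin.init w, hQ⟩, Subtype.ext (show Fin.snoc (Fin.init w) (0 : Fin 3) = w by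
        rw [← hl]; exact Fin.snoc_init_self w)⟩
    · have hl : w (Fin.last n) = 1 := Fin.ext h1
      obtain ⟨hy1, hQ⟩ := Q_init_n w (by rw [hl]; decide) hw
      rw [Nat.add_sub_cancel] at hQ
      exact ⟨.inr ⟨Fin.init w, hQ⟩, Subtype.ext (show Fin.snoc (Fin.init w) (1 : Fin 3) = w by
        rw [← hl]; exact Fin.snoc_init_self w)⟩
    · have hl : w (Fin.last n) = 2 := Fin.ext h2
      exact absurd (Q_last_two hw hl) (by omega)

lemma card_step_eq {n x : ℕ} :
    Nat.card {w : Fin (n + 1) → Fin 3 // Q (n + 1) (x + 1) (x + 1) w}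
      = 2 * Nat.card {w : Fin n → Fin 3 // Q n (x + 1) x w} := by
  have hsum := Nat.card_sum (α := {w : Fin n → Fin 3 // Q n (x + 1) x w})
    (β := {w : Fin n → Fin 3 // Q n (x + 1) x w})
  rw [show ∀ a : ℕ, a + a = 2 * a from fun a => by omega] at hsum
  rw [← hsum]
  refine (Nat.card_eq_of_bijective (fun z =>
    match z with
    | .inl ⟨w, hw⟩ => ⟨Fin.snoc w 1,
        Q_snoc_n w 1 (by decide) (by omega) (fun h => absurd h (by decide)) hw⟩
    | .inr ⟨w, hw⟩ => ⟨Fin.snoc w 2,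
        Q_snoc_n w 2 (by decide) (by omega) (fun _ => rfl) hw⟩) ⟨?_, ?_⟩).symm
  · rintro (⟨w1, h1⟩ | ⟨w1, h1⟩) (⟨w2, h2⟩ | ⟨w2, h2⟩) hab <;>
      simp only [Subtype.mk.injEq] at hab
    · have := congrArg Fin.init hab
      simp only [Fin.init_snoc] at this
      simp [this]
    · have := congrFun hab (Fin.last n)
      simp only [Fin.snoc_last] at this
      exact absurd this (by decide)
    · have := congrFun hab (Fin.last n)
      simp only [Fin.snoc_last] at this
      exact absurd this (by decide)
    · have := congrArg Fin.init hab
      simp only [Fin.init_snoc] at this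
      simp [this]
  · rintro ⟨w, hw⟩
    have h3 : (w (Fin.last n) : ℕ) = 0 ∨ (w (Fin.last n) : ℕ) = 1 ∨
        (w (Fin.last n) : ℕ) = 2 := by have := (w (Fin.last n)).is_lt; omega
    rcases h3 with h0 | h1 | h2
    · have hl : w (Fin.last n) = 0 := Fin.ext h0
      obtain ⟨hx1, hQ⟩ := Q_init_e w hl hw
      have hpre := hQ.2.2.1 n le_rfl
      rw [hQ.1, hQ.2.1] at hpre
      omega
    · have hl : w (Fin.last n) = 1 := Fin.ext h1
      obtain ⟨hy1, hQ⟩ := Q_init_n w (by rw [hl]; decide) hw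
      rw [Nat.add_sub_cancel] at hQ
      exact ⟨.inl ⟨Fin.init w, hQ⟩, Subtype.ext (show Fin.snoc (Fin.init w) (1 : Fin 3) = w by
        rw [← hl]; exact Fin.snoc_init_self w)⟩
    · have hl : w (Fin.last n) = 2 := Fin.ext h2
      obtain ⟨hy1, hQ⟩ := Q_init_n w (by rw [hl]; decide) hw
      rw [Nat.add_sub_cancel] at hQ
      exact ⟨.inr ⟨Fin.init w, hQ⟩, Subtype.ext (show Fin.snoc (Fin.init w) (2 : Fin 3) = w by
        rw [← hl]; exact Fin.snoc_init_self w)⟩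

lemma eq_zero_of_ncount {L : ℕ} {w : Fin L → Fin 3} (h : ncount w L = 0) :
    ∀ s, w s = 0 := by
  intro s
  unfold ncount at h
  rw [Finset.card_eq_zero] at h
  by_contra hs
  have : s ∈ (Finset.univ.filter (fun s : Fin L => (s : ℕ) < L ∧ w s ≠ 0)) := by
    simp [s.is_lt, hs]
  rw [h] at this
  exact absurd this (Finset.notMem_empty s)

lemma card_y0 (L : ℕ) :
    Nat.card {w : Fin L → Fin 3 // Q L L 0 w} = 1 := by
  rw [Nat.card_eq_one_iff_unique]
  constructor
  · constructor
    rintro ⟨w1, h1⟩ ⟨w2, h2⟩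
    apply Subtype.ext
    funext s
    show w1 s = w2 s
    rw [eq_zero_of_ncount h1.2.1 s, eq_zero_of_ncount h2.2.1 s]
  · refine ⟨fun _ => 0, ?_, ?_, ?_, ?_⟩
    · unfold ecount
      simp [Fin.is_lt]
    · unfold ncount
      simp
    · intro m hm
      unfold ncount
      simp
    · intro t ht
      simp at ht

lemma main : ∀ L x y : ℕ, y ≤ x → x + y = L →
    Nat.card {w : Fin L → Fin 3 // Q L x y w} = L.choose y := by
  intro L
  induction L using Nat.strong_induction_on with
  | _ L ih =>
    intro x y hyx hL
    rcases y with _ | y'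
    · have hx : x = L := by omega
      subst hx
      rw [card_y0]
      simp
    · obtain ⟨n, rfl⟩ : ∃ n, L = n + 1 := ⟨x + y', by omega⟩
      rcases eq_or_lt_of_le hyx with heq | hlt
      · subst heq
        rw [card_step_eq]
        rw [ih n (by omega) (y' + 1) y' (by omega) (by omega)]
        have hs := Nat.choose_symm (show y' + 1 ≤ n by omega)
        rw [show n - (y' + 1) = y' by omega] at hs
        have hp := Nat.choose_succ_succ n y'
        simp only [Nat.succ_eq_add_one] at hp hs ⊢
        omega
      · obtain ⟨x'', rfl⟩ : ∃ x'', x = x'' + 1 := ⟨x - 1, by omega⟩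
        rw [card_step_lt (by omega)]
        rw [ih n (by omega) x'' (y' + 1) (by omega) (by omega)]
        rw [ih n (by omega) (x'' + 1) y' (by omega) (by omega)]
        have hp := Nat.choose_succ_succ n y'
        simp only [Nat.succ_eq_add_one] at hp ⊢
        omega

/-- The number of lattice paths from `(0,0)` to `(x,y)` (with `y ≤ x`) using east and
north steps, staying weakly below the diagonal, where each north step ending on the
diagonal comes in two distinguishable colors (here a north step may carry the color
`2` exactly when it ends on the diagonal), equals `C(x+y, y)`. -/
theorem stmt3 (x y : ℕ) (hxy : y ≤ x) :
    Nat.card {w : Fin (x + y) → Fin 3 //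
        ecount w (x + y) = x ∧ ncount w (x + y) = y ∧
        (∀ m : ℕ, m ≤ x + y → ncount w m ≤ ecount w m) ∧
        (∀ t : Fin (x + y), w t = 2 →
          ncount w ((t : ℕ) + 1) = ecount w ((t : ℕ) + 1)) }
      = (x + y).choose y :=
  main (x + y) x y hxy rfl
end

section
/- For all partitions λ inside an n×k rectangle, the number of semistandard Young tableaux of shape λ with entries in {1,...,n} times the number of semistandard Young tableaux of shape λ' (the conjugate) with entries in {1,...,k}, summed over all λ ⊆ k^n, equals 2^{nk}. -/
/-!
A semistandard tableau of shape `λ` with entries `≤ N` is a chain `∅ = λ⁰ ⊆ ⋯ ⊆ λᴺ = λ` in which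
every `λᵗ / λᵗ⁻¹` (the boxes holding `t`) is a horizontal strip; dually, a tableau of shape `λ'`
with entries `≤ k` is a chain of `k` vertical strips ending in `λ`. So the sum counts `n` horizontal
strips going up to some `λ` followed by `k` vertical strips coming back down, all inside the box.

The local rule: when the box leaves room, the `λ` with `λ / μ` a horizontal and `λ / ν` a vertical
strip are exactly twice as many as the `ρ` with `μ / ρ` a vertical and `ν / ρ` a horizontal strip.
Both sets are products over the rows, each row having at most two admissible lengths, and the two
products telescope into each other. Commuting one horizontal strip past `k` vertical strips hence
costs a factor `2 ^ k` (Pieri's rule for `∑ eᵣ` at `1ᵏ`), and induction on the number of horizontal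
strips gives `2 ^ (n * k)`.
-/

open Finset

noncomputable section
open scoped Classical

/-- `T` is a semistandard Young tableau of shape with row lengths `r` and entries in
`Fin N` (representing `{1, …, N}`): rows weakly increase, columns strictly increase. -/
def IsSsyt {m N : ℕ} (r : Fin m → ℕ) (T : ∀ i : Fin m, Fin (r i) → Fin N) : Prop :=
  (∀ (i : Fin m) (j j' : Fin (r i)), (j : ℕ) ≤ (j' : ℕ) → T i j ≤ T i j') ∧
  (∀ (i i' : Fin m) (j : Fin (r i)) (j' : Fin (r i')),
    i < i' → (j : ℕ) = (j' : ℕ) → T i j < T i' j')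

/-- The finite set of semistandard Young tableaux of shape `r` with entries in `Fin N`. -/
def ssytFinset (N : ℕ) {m : ℕ} (r : Fin m → ℕ) :
    Finset (∀ i : Fin m, Fin (r i) → Fin N) :=
  Finset.univ.filter (fun T => IsSsyt r T)

theorem Fin.lt_card_filter_iff {L : ℕ} {p : Fin L → Prop} [DecidablePred p]
    (hp : ∀ i j, i ≤ j → p j → p i) (i : Fin L) : (i : ℕ) < #{j | p j} ↔ p i := by
  constructor
  · intro hi
    by_contra hpi
    have : #{j | p j} ≤ #(Iio i) := card_le_card fun j hj => by
      simp only [mem_filter, mem_univ, true_and, mem_Iio] at hj ⊢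
      by_contra hij
      exact hpi (hp _ _ (not_lt.1 hij) hj)
    rw [Fin.card_Iio] at this
    omega
  · intro hpi
    have : #(Iic i) ≤ #{j | p j} := card_le_card fun j hj => by
      simp only [mem_filter, mem_univ, true_and, mem_Iic] at hj ⊢
      exact hp _ _ hj hpi
    rw [Fin.card_Iic] at this
    omega

theorem Fin.antitone_of_le_of_val_eq_succ {a : ℕ} {α : Type*} [Preorder α] {f : Fin a → α}
    (h : ∀ i j : Fin a, (j : ℕ) = i + 1 → f j ≤ f i) : Antitone f := by
  cases a with
  | zero => exact fun i => i.elim0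
  | succ a => exact Fin.antitone_iff_succ_le.2 fun i => h _ _ (by simp)

theorem card_filter_of_iff_le_val_le {K lo hi : ℕ} {p : Fin (K + 1) → Prop} [DecidablePred p]
    (hp : ∀ t, p t ↔ lo ≤ (t : ℕ) ∧ (t : ℕ) ≤ hi) (h : hi ≤ K) : #{t | p t} = hi + 1 - lo := by
  have : ({t | p t} : Finset _).map Fin.valEmbedding = Icc lo hi := by
    ext x
    simp only [mem_map, mem_filter, mem_univ, true_and, Fin.valEmbedding_apply, mem_Icc, hp]
    exact ⟨fun ⟨t, ht, hx⟩ => hx ▸ ht, fun hx => ⟨⟨x, by omega⟩, hx, rfl⟩⟩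
  rw [← card_map, this, Nat.card_Icc]

theorem sum_sum_filter_eq_sum_card_mul {α β : Type*} [Fintype α] [Fintype β] (p : α → Prop)
    (r : α → β → Prop) [DecidablePred p] [∀ x y, Decidable (r x y)] (f : β → ℕ) :
    ∑ x with p x, ∑ y with r x y, f y = ∑ y, #{x | p x ∧ r x y} * f y := by
  simp only [sum_filter, card_filter, sum_mul, ite_mul, one_mul, zero_mul, ite_and]
  rw [sum_comm]
  refine sum_congr rfl fun x _ => ?_
  split_ifs <;> simp

section Partitions

variable {a b : ℕ}

def IsHorizontalStrip (μ l : Fin a → Fin (b + 1)) : Prop :=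
  μ ≤ l ∧ ∀ i j : Fin a, (j : ℕ) = i + 1 → l j ≤ μ i

def IsVerticalStrip (ν l : Fin a → Fin (b + 1)) : Prop :=
  ν ≤ l ∧ ∀ i, (l i : ℕ) ≤ ν i + 1

theorem IsHorizontalStrip.antitone_left {μ l : Fin a → Fin (b + 1)} (h : IsHorizontalStrip μ l) :
    Antitone μ :=
  Fin.antitone_of_le_of_val_eq_succ fun i j hij => (h.1 j).trans (h.2 i j hij)

theorem IsHorizontalStrip.antitone_right {μ l : Fin a → Fin (b + 1)}
    (h : IsHorizontalStrip μ l) : Antitone l :=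
  Fin.antitone_of_le_of_val_eq_succ fun i j hij => (h.2 i j hij).trans (h.1 i)

theorem IsHorizontalStrip.le_of_lt {μ l : Fin a → Fin (b + 1)} (h : IsHorizontalStrip μ l)
    {i i' : Fin a} (hii' : i < i') : l i' ≤ μ i := by
  have hi : (i : ℕ) + 1 < a := by omega
  exact (h.antitone_right (show (⟨i + 1, hi⟩ : Fin a) ≤ i' from hii')).trans (h.2 i _ rfl)

def conj (l : Fin a → Fin (b + 1)) : Fin b → Fin (a + 1) :=
  fun j => ⟨#{i | (j : ℕ) < (l i : ℕ)},
    Nat.lt_succ_of_le ((card_filter_le _ _).trans_eq (card_fin a))⟩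

theorem conj_val (l : Fin a → Fin (b + 1)) (j : Fin b) :
    (conj l j : ℕ) = #{i | (j : ℕ) < (l i : ℕ)} := rfl

theorem antitone_conj (l : Fin a → Fin (b + 1)) : Antitone (conj l) := fun j j' hjj' =>
  Fin.le_def.2 <| by
    simp only [conj_val]
    exact card_le_card fun i hi => by
      simp only [mem_filter, mem_univ, true_and] at hi ⊢
      omega

theorem monotone_conj : Monotone (conj : (Fin a → Fin (b + 1)) → Fin b → Fin (a + 1)) :=
  fun l l' hll' j => Fin.le_def.2 <| by
    simp only [conj_val]
    exact card_le_card fun i hi => by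
      have : l i ≤ l' i := hll' i
      simp only [mem_filter, mem_univ, true_and] at hi ⊢
      omega

theorem lt_conj_iff {l : Fin a → Fin (b + 1)} (hl : Antitone l) (i : Fin a) (j : Fin b) :
    (i : ℕ) < conj l j ↔ (j : ℕ) < l i :=
  Fin.lt_card_filter_iff (p := fun i => (j : ℕ) < l i) (fun _ _ hii' h => h.trans_le (hl hii')) i

theorem conj_conj {l : Fin a → Fin (b + 1)} (hl : Antitone l) : conj (conj l) = l := by
  funext i
  ext
  rw [conj_val, filter_congr fun j _ => lt_conj_iff hl i j, Fin.card_filter_val_lt]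
  omega

theorem conj_le_iff {m : Fin b → Fin (a + 1)} {l : Fin a → Fin (b + 1)} (hm : Antitone m)
    (hl : Antitone l) : m ≤ conj l ↔ conj m ≤ l :=
  ⟨fun h => conj_conj hl ▸ monotone_conj h, fun h => conj_conj hm ▸ monotone_conj h⟩

theorem conj_eq_zero_iff {l : Fin a → Fin (b + 1)} : conj l = 0 ↔ l = 0 := by
  constructor
  · intro h
    funext i
    by_contra hi
    have hpos : 0 < (l i : ℕ) := Nat.pos_of_ne_zero fun h0 => hi (Fin.ext h0)
    have : i ∈ ({i | ((⟨0, by omega⟩ : Fin b) : ℕ) < (l i : ℕ)} : Finset _) := by simpa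
    have := card_pos.2 ⟨i, this⟩
    rw [← conj_val, h] at this
    simp at this
  · rintro rfl
    funext j
    ext
    simp [conj_val]

theorem isHorizontalStrip_conj_iff {m : Fin b → Fin (a + 1)} {l : Fin a → Fin (b + 1)}
    (hm : Antitone m) (hl : Antitone l) :
    IsHorizontalStrip m (conj l) ↔ IsVerticalStrip (conj m) l := by
  refine and_congr (conj_le_iff hm hl) ⟨fun h i => ?_, fun h j j' hjj' => ?_⟩
  · by_contra! hi
    have hj : (conj m i : ℕ) < b := by omega
    have hi' : (i : ℕ) < conj l ⟨conj m i + 1, by omega⟩ := (lt_conj_iff hl _ _).2 (by simp; omega)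
    have := h ⟨conj m i, hj⟩ ⟨conj m i + 1, by omega⟩ rfl
    have := (lt_conj_iff hm ⟨conj m i, hj⟩ i).2 (by omega)
    simp at this
  · by_contra! hj
    have hi : (m j : ℕ) < a := by have := (conj l j').isLt; omega
    have := (lt_conj_iff hl ⟨m j, hi⟩ j').1 hj
    have := (lt_conj_iff hm j ⟨m j, hi⟩).1 (by have := h ⟨m j, hi⟩; omega)
    simp at this

end Partitions

section Tableaux

variable {a b N : ℕ}

theorem lt_of_ssytFinset_nonempty {r : Fin a → ℕ} (hr : Antitone r)
    (h : (ssytFinset N r).Nonempty) {i : Fin a} (hi : r i ≠ 0) : (i : ℕ) < N := by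
  obtain ⟨T, hT⟩ := h
  simp only [ssytFinset, mem_filter, mem_univ, true_and] at hT
  have hpos : ∀ d : Fin (i + 1), 0 < r ⟨d, by omega⟩ := fun d =>
    (Nat.pos_of_ne_zero hi).trans_le (hr (Fin.le_def.2 (Nat.lt_succ_iff.1 d.isLt)))
  let f : Fin (i + 1) → Fin N := fun d => T ⟨d, by omega⟩ ⟨0, hpos d⟩
  have hf : StrictMono f := fun d d' hdd' => hT.2 _ _ _ _ (by simpa using hdd') rfl
  simpa using Fintype.card_le_of_injective f hf.injective

theorem card_ssytFinset_of_eq_zero {r : Fin a → ℕ} (hr : r = 0) : #(ssytFinset N r) = 1 := by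
  subst hr
  rw [ssytFinset, filter_true_of_mem fun T _ => ⟨fun i j => j.elim0, fun i _ j => j.elim0⟩,
    card_univ]
  simp

theorem ssytFinset_zero_eq_empty {r : Fin a → ℕ} (hr : r ≠ 0) : ssytFinset 0 r = ∅ := by
  obtain ⟨i, hi⟩ := Function.ne_iff.1 hr
  exact eq_empty_of_forall_notMem fun T _ => (T i ⟨0, Nat.pos_of_ne_zero hi⟩).elim0

def ssytCount (N : ℕ) (l : Fin a → Fin (b + 1)) : ℕ := #(ssytFinset N fun i => (l i : ℕ))

theorem ssytCount_zero_shape (N : ℕ) : ssytCount N (0 : Fin a → Fin (b + 1)) = 1 :=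
  card_ssytFinset_of_eq_zero rfl

theorem ssytCount_zero (l : Fin a → Fin (b + 1)) : ssytCount 0 l = if l = 0 then 1 else 0 := by
  split_ifs with hl
  · exact hl ▸ ssytCount_zero_shape 0
  · refine card_eq_zero.2 (ssytFinset_zero_eq_empty fun h => hl (funext fun i => ?_))
    exact Fin.ext (congrFun h i)

theorem eq_zero_of_ssytCount_ne_zero {l : Fin a → Fin (b + 1)} (hl : Antitone l)
    (h : ssytCount N l ≠ 0) {i : Fin a} (hi : N ≤ i) : l i = 0 := by
  by_contra hli
  have := lt_of_ssytFinset_nonempty (fun _ _ hij => Fin.le_def.1 (hl hij))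
    (card_ne_zero.1 h) (i := i) fun h0 => hli (Fin.ext h0)
  omega

end Tableaux

section Branching

variable {a b N : ℕ} {m r : Fin a → Fin (b + 1)}

def belowShape (T : ∀ i, Fin (r i) → Fin (N + 1)) : Fin a → Fin (b + 1) :=
  fun i => ⟨#{j | (T i j : ℕ) < N}, (card_filter_le _ _).trans_lt (by simp; omega)⟩

theorem lt_belowShape_iff {T : ∀ i, Fin (r i) → Fin (N + 1)} (hT : IsSsyt (fun i => (r i : ℕ)) T)
    (i : Fin a) (j : Fin (r i)) : (j : ℕ) < belowShape T i ↔ (T i j : ℕ) < N :=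
  Fin.lt_card_filter_iff (p := fun j => (T i j : ℕ) < N)
    (fun j j' hjj' h => (Fin.le_def.1 (hT.1 i j j' hjj')).trans_lt h) j

theorem isHorizontalStrip_belowShape (hr : Antitone r) {T : ∀ i, Fin (r i) → Fin (N + 1)}
    (hT : IsSsyt (fun i => (r i : ℕ)) T) : IsHorizontalStrip (belowShape T) r := by
  refine ⟨fun i => Fin.le_def.2 ((card_filter_le univ _).trans_eq (card_fin _)),
    fun i i' hii' => ?_⟩
  by_contra! hlt
  have hc : (belowShape T i : ℕ) < r i := hlt.trans_le (hr (Fin.le_def.2 (by omega)))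
  have hcol := hT.2 i i' ⟨_, hc⟩ ⟨_, hlt⟩ (Fin.lt_def.2 (by omega)) rfl
  have := (lt_belowShape_iff hT i ⟨_, hc⟩).not.1 (lt_irrefl _)
  have := (T i' ⟨_, hlt⟩).isLt
  rw [Fin.lt_def] at hcol
  omega

def extendTableau (T : ∀ i, Fin (m i) → Fin N) : ∀ i, Fin (r i) → Fin (N + 1) :=
  fun i j => if h : (j : ℕ) < m i then (T i ⟨j, h⟩).castSucc else Fin.last N

theorem isSsyt_extendTableau (hm : IsHorizontalStrip m r) {T : ∀ i, Fin (m i) → Fin N}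
    (hT : IsSsyt (fun i => (m i : ℕ)) T) :
    IsSsyt (fun i => (r i : ℕ)) (extendTableau T : ∀ i, Fin (r i) → Fin (N + 1)) := by
  refine ⟨fun i j j' hjj' => ?_, fun i i' j j' hii' hjj' => ?_⟩
  · unfold extendTableau
    split_ifs with h h'
    · exact Fin.castSucc_le_castSucc_iff.2 (hT.1 i _ _ hjj')
    · exact (Fin.castSucc_lt_last _).le
    · omega
    · exact le_rfl
  · have hj : (j : ℕ) < m i := by
      have := hm.le_of_lt hii'
      have : (j' : ℕ) < r i' := j'.isLt
      omega
    unfold extendTableau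
    rw [dif_pos hj]
    split_ifs with hj'
    · exact Fin.castSucc_lt_castSucc_iff.2 (hT.2 i i' _ _ hii' hjj')
    · exact Fin.castSucc_lt_last _

theorem belowShape_extendTableau (hm : m ≤ r) (T : ∀ i, Fin (m i) → Fin N) :
    belowShape (extendTableau T : ∀ i, Fin (r i) → Fin (N + 1)) = m := by
  funext i
  ext
  have hiff : ∀ j : Fin (r i), ((extendTableau T i j : Fin (N + 1)) : ℕ) < N ↔ (j : ℕ) < m i := by
    intro j
    unfold extendTableau
    split_ifs with h <;> simp [h]
  simp only [belowShape, hiff, Fin.card_filter_val_lt]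
  exact min_eq_right (hm i)

theorem extendTableau_injective (hm : m ≤ r) :
    Function.Injective
      (extendTableau : (∀ i, Fin (m i) → Fin N) → ∀ i, Fin (r i) → Fin (N + 1)) := by
  intro T T' h
  funext i j
  have := congrFun₂ h i ⟨j, j.isLt.trans_le (hm i)⟩
  simpa [extendTableau] using this

theorem exists_extendTableau_eq (hm : m ≤ r) {T : ∀ i, Fin (r i) → Fin (N + 1)}
    (hT : IsSsyt (fun i => (r i : ℕ)) T) (hTm : belowShape T = m) :
    ∃ T' ∈ ssytFinset N fun i => (m i : ℕ), extendTableau T' = T := by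
  have hlt : ∀ i (j : Fin (r i)), (j : ℕ) < m i ↔ T i j ≠ Fin.last N := fun i j => by
    rw [← hTm, lt_belowShape_iff hT, Fin.ne_iff_vne, Fin.val_last]
    have := (T i j).isLt
    omega
  let T' : ∀ i, Fin (m i) → Fin N := fun i j =>
    (T i (Fin.castLE (hm i) j)).castPred ((hlt i _).1 j.isLt)
  refine ⟨T', ?_, ?_⟩
  · simp only [ssytFinset, mem_filter, mem_univ, true_and]
    refine ⟨fun i j j' hjj' => ?_, fun i i' j j' hii' hjj' => ?_⟩
    · exact Fin.castPred_le_castPred_iff.2 (hT.1 i _ _ hjj')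
    · exact Fin.castPred_lt_castPred_iff.2 (hT.2 i i' _ _ hii' hjj')
  · funext i j
    unfold extendTableau
    split_ifs with h
    · exact Fin.castSucc_castPred _ _
    · exact (not_not.1 (mt (hlt i j).2 h)).symm

theorem ssytCount_succ (hr : Antitone r) :
    ssytCount (N + 1) r = ∑ m with IsHorizontalStrip m r, ssytCount N m := by
  have hmaps : ∀ T ∈ ssytFinset (N + 1) (fun i => (r i : ℕ)),
      belowShape T ∈ ({m | IsHorizontalStrip m r} : Finset _) := fun T hT => by
    simp only [ssytFinset, mem_filter, mem_univ, true_and] at hT ⊢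
    exact isHorizontalStrip_belowShape hr hT
  rw [ssytCount, card_eq_sum_card_fiberwise hmaps]
  refine sum_congr rfl fun m hm => ?_
  simp only [mem_filter, mem_univ, true_and] at hm
  refine (card_nbij extendTableau (fun T hT => ?_) (extendTableau_injective hm.1).injOn
    fun T hT => ?_).symm
  · rw [mem_coe, ssytFinset, mem_filter] at hT
    rw [mem_coe, mem_filter, ssytFinset, mem_filter]
    exact ⟨⟨mem_univ _, isSsyt_extendTableau hm hT.2⟩, belowShape_extendTableau hm.1 T⟩
  · obtain ⟨hT, hTm⟩ := mem_filter.1 (mem_coe.1 hT)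
    exact exists_extendTableau_eq hm.1 (mem_filter.1 hT).2 hTm

end Branching

section Conjugate

variable {a b N : ℕ}

def conjSsytCount (N : ℕ) (l : Fin a → Fin (b + 1)) : ℕ := ssytCount N (conj l)

theorem conjSsytCount_succ {l : Fin a → Fin (b + 1)} (hl : Antitone l) :
    conjSsytCount (N + 1) l = ∑ ν with Antitone ν ∧ IsVerticalStrip ν l, conjSsytCount N ν := by
  rw [conjSsytCount, ssytCount_succ (antitone_conj l)]
  refine sum_nbij' conj conj (fun m hm => ?_) (fun ν hν => ?_) (fun m hm => ?_) (fun ν hν => ?_)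
    (fun m hm => ?_)
  all_goals simp only [mem_filter, mem_univ, true_and] at *
  · exact ⟨antitone_conj m, (isHorizontalStrip_conj_iff hm.antitone_left hl).1 hm⟩
  · exact (isHorizontalStrip_conj_iff (antitone_conj ν) hl).2 (by rw [conj_conj hν.1]; exact hν.2)
  · exact conj_conj hm.antitone_left
  · exact conj_conj hν.1
  · rw [conjSsytCount, conj_conj hm.antitone_left]

theorem conjSsytCount_zero (l : Fin a → Fin (b + 1)) :
    conjSsytCount 0 l = if l = 0 then 1 else 0 := by
  simp only [conjSsytCount, ssytCount_zero, conj_eq_zero_iff]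

theorem le_of_conjSsytCount_ne_zero {l : Fin a → Fin (b + 1)} (hl : Antitone l)
    (h : conjSsytCount N l ≠ 0) (i : Fin a) : (l i : ℕ) ≤ N := by
  by_contra! hi
  have hN : N < b := by omega
  have h0 := eq_zero_of_ssytCount_ne_zero (antitone_conj l) h (i := ⟨N, hN⟩) le_rfl
  have := (lt_conj_iff hl i ⟨N, hN⟩).2 hi
  simp [h0] at this

end Conjugate

section LocalRule

-- `growChoices k μ ν i` counts the values `ν i ≤ l i ≤ ν i + 1` with `μ i ≤ l i ≤ μ (i - 1)`
-- (`≤ k` for `i = 0`), and `shrinkChoices μ ν i` the values `ρ i ≤ μ i ≤ ρ i + 1` with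
-- `ν (i + 1) ≤ ρ i ≤ ν i`: the admissible lengths of row `i` in the local rule.
def growChoices (k : ℕ) (μ ν : ℕ → ℕ) (i : ℕ) : ℕ :=
  (if μ i ≤ ν i ∧ ν i ≤ (if i = 0 then k else μ (i - 1)) then 1 else 0) +
    (if μ i ≤ ν i + 1 ∧ ν i + 1 ≤ (if i = 0 then k else μ (i - 1)) then 1 else 0)

def shrinkChoices (μ ν : ℕ → ℕ) (i : ℕ) : ℕ :=
  (if ν (i + 1) ≤ μ i ∧ μ i ≤ ν i then 1 else 0) +
    (if ν (i + 1) + 1 ≤ μ i ∧ μ i ≤ ν i + 1 then 1 else 0)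

theorem prod_growChoices_eq_two_mul {k n : ℕ} {μ ν : ℕ → ℕ} (hμ : Antitone μ) (hν : Antitone ν)
    (hn : 0 < n) (hμn : μ (n - 1) = 0) (hνn : ν n = 0) (hνk : ν 0 < k) :
    ∏ i ∈ range n, growChoices k μ ν i = 2 * ∏ i ∈ range n, shrinkChoices μ ν i := by
  -- `C d` is `growChoices k μ ν d` with its cap dropped.
  let C : ℕ → ℕ := fun d => (if μ d ≤ ν d then 1 else 0) + (if μ d ≤ ν d + 1 then 1 else 0)
  have key : ∀ d, ∏ i ∈ range (d + 1), growChoices k μ ν i =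
      C d * ∏ i ∈ range d, shrinkChoices μ ν i := by
    intro d
    induction d with
    | zero =>
      simp only [zero_add, prod_range_one, prod_range_zero, mul_one, growChoices, C]
      split_ifs <;> omega
    | succ d ih =>
      have step : C d * growChoices k μ ν (d + 1) = C (d + 1) * shrinkChoices μ ν d := by
        have : μ (d + 1) ≤ μ d := hμ d.le_succ
        have : ν (d + 1) ≤ ν d := hν d.le_succ
        simp only [C, growChoices, shrinkChoices, if_neg d.succ_ne_zero, Nat.add_sub_cancel]
        split_ifs <;> omega
      rw [prod_range_succ, ih, mul_right_comm, step, prod_range_succ]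
      ring
  obtain ⟨m, rfl⟩ : ∃ m, n = m + 1 := ⟨n - 1, by omega⟩
  rw [Nat.add_sub_cancel] at hμn
  have hC : C m = 2 := by simp [C, hμn]
  have hB : shrinkChoices μ ν m = 1 := by simp [shrinkChoices, hμn, hνn]
  rw [key, hC, prod_range_succ, hB, mul_one]

theorem card_filter_grow {k lo cap v : ℕ} (hcap : cap ≤ k) :
    #{t : Fin (k + 1) | lo ≤ (t : ℕ) ∧ (t : ℕ) ≤ cap ∧ v ≤ (t : ℕ) ∧ (t : ℕ) ≤ v + 1} =
      (if lo ≤ v ∧ v ≤ cap then 1 else 0) + (if lo ≤ v + 1 ∧ v + 1 ≤ cap then 1 else 0) := by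
  rw [card_filter_of_iff_le_val_le (lo := max lo v) (hi := min cap (v + 1)) (fun t => by omega)
    (by omega)]
  split_ifs <;> omega

theorem card_filter_shrink {k lo hi w : ℕ} (hhi : hi ≤ k) :
    #{t : Fin (k + 1) | lo ≤ (t : ℕ) ∧ (t : ℕ) ≤ hi ∧ (t : ℕ) ≤ w ∧ w ≤ (t : ℕ) + 1} =
      (if lo ≤ w ∧ w ≤ hi then 1 else 0) + (if lo + 1 ≤ w ∧ w ≤ hi + 1 then 1 else 0) := by
  rw [card_filter_of_iff_le_val_le (lo := max lo (w - 1)) (hi := min hi w) (fun t => by omega)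
    (by omega)]
  split_ifs <;> omega

variable {n k : ℕ}

def rowLength (μ : Fin n → Fin (k + 1)) (i : ℕ) : ℕ := if h : i < n then μ ⟨i, h⟩ else 0

theorem rowLength_val (μ : Fin n → Fin (k + 1)) (i : Fin n) : rowLength μ i = μ i := by
  simp [rowLength]

theorem rowLength_le (μ : Fin n → Fin (k + 1)) (i : ℕ) : rowLength μ i ≤ k := by
  unfold rowLength
  split_ifs
  · exact Fin.is_le _
  · exact Nat.zero_le k

theorem antitone_rowLength {μ : Fin n → Fin (k + 1)} (hμ : Antitone μ) : Antitone (rowLength μ) :=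
  antitone_nat_of_succ_le fun i => by
    unfold rowLength
    split_ifs with h h'
    · exact hμ (Fin.le_def.2 (Nat.le_succ i))
    · omega
    · exact Nat.zero_le _
    · exact le_rfl

theorem isHorizontalStrip_iff_forall_upper {μ l : Fin n → Fin (k + 1)} :
    IsHorizontalStrip μ l ↔
      ∀ i : Fin n, μ i ≤ l i ∧ (l i : ℕ) ≤ if (i : ℕ) = 0 then k else rowLength μ (i - 1) := by
  refine ⟨fun ⟨hle, hadj⟩ i => ⟨hle i, ?_⟩, fun h => ⟨fun i => (h i).1, fun i j hij => ?_⟩⟩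
  · split_ifs with hi
    · exact Fin.is_le _
    · rw [rowLength, dif_pos (by omega)]
      exact hadj ⟨i - 1, by omega⟩ i (by simp; omega)
  · have := (h j).2
    rw [if_neg (by omega), show (j : ℕ) - 1 = i by omega, rowLength_val] at this
    exact Fin.le_def.2 this

theorem isHorizontalStrip_iff_forall_lower {ρ ν : Fin n → Fin (k + 1)} :
    IsHorizontalStrip ρ ν ↔ ∀ i : Fin n, ρ i ≤ ν i ∧ rowLength ν (i + 1) ≤ ρ i := by
  refine ⟨fun ⟨hle, hadj⟩ i => ⟨hle i, ?_⟩, fun h => ⟨fun i => (h i).1, fun i j hij => ?_⟩⟩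
  · unfold rowLength
    split_ifs with h
    · exact hadj i ⟨i + 1, h⟩ rfl
    · exact Nat.zero_le _
  · have := (h i).2
    rw [← hij, rowLength_val] at this
    exact Fin.le_def.2 this

theorem card_horizontal_vertical {μ ν : Fin n → Fin (k + 1)} :
    #{l | IsHorizontalStrip μ l ∧ IsVerticalStrip ν l} =
      ∏ i ∈ range n, growChoices k (rowLength μ) (rowLength ν) i := by
  have : ({l | IsHorizontalStrip μ l ∧ IsVerticalStrip ν l} : Finset _) =
      Fintype.piFinset fun i : Fin n => {t : Fin (k + 1) | rowLength μ i ≤ (t : ℕ) ∧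
        (t : ℕ) ≤ (if (i : ℕ) = 0 then k else rowLength μ (i - 1)) ∧
        rowLength ν i ≤ (t : ℕ) ∧ (t : ℕ) ≤ rowLength ν i + 1} := by
    ext l
    simp only [mem_filter, mem_univ, true_and, Fintype.mem_piFinset,
      isHorizontalStrip_iff_forall_upper, IsVerticalStrip, Pi.le_def, ← forall_and, rowLength_val]
    exact forall_congr' fun i => by omega
  rw [this, Fintype.card_piFinset, ← Fin.prod_univ_eq_prod_range]
  refine prod_congr rfl fun i _ => card_filter_grow ?_
  split_ifs
  · exact le_rfl
  · exact rowLength_le μ _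

theorem card_vertical_horizontal {μ ν : Fin n → Fin (k + 1)} :
    #{ρ | IsVerticalStrip ρ μ ∧ IsHorizontalStrip ρ ν} =
      ∏ i ∈ range n, shrinkChoices (rowLength μ) (rowLength ν) i := by
  have : ({ρ | IsVerticalStrip ρ μ ∧ IsHorizontalStrip ρ ν} : Finset _) =
      Fintype.piFinset fun i : Fin n => {t : Fin (k + 1) | rowLength ν (i + 1) ≤ (t : ℕ) ∧
        (t : ℕ) ≤ rowLength ν i ∧ (t : ℕ) ≤ rowLength μ i ∧ rowLength μ i ≤ (t : ℕ) + 1} := by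
    ext ρ
    simp only [mem_filter, mem_univ, true_and, Fintype.mem_piFinset,
      isHorizontalStrip_iff_forall_lower, IsVerticalStrip, Pi.le_def, ← forall_and, rowLength_val]
    exact forall_congr' fun i => by omega
  rw [this, Fintype.card_piFinset, ← Fin.prod_univ_eq_prod_range]
  exact prod_congr rfl fun i _ => card_filter_shrink (rowLength_le ν _)

theorem card_horizontal_vertical_eq_two_mul {μ ν : Fin n → Fin (k + 1)} (hμ : Antitone μ)
    (hν : Antitone ν) (hμ0 : ∃ i, μ i = 0) (hνk : ∀ i, (ν i : ℕ) < k) :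
    #{l | IsHorizontalStrip μ l ∧ IsVerticalStrip ν l} =
      2 * #{ρ | IsVerticalStrip ρ μ ∧ IsHorizontalStrip ρ ν} := by
  obtain ⟨i₀, hi₀⟩ := hμ0
  have hn : 0 < n := i₀.pos
  rw [card_horizontal_vertical, card_vertical_horizontal]
  refine prod_growChoices_eq_two_mul (antitone_rowLength hμ) (antitone_rowLength hν) hn ?_ ?_ ?_
  · have := hμ (Fin.le_def.2 (show (i₀ : ℕ) ≤ n - 1 by omega) : i₀ ≤ ⟨n - 1, by omega⟩)
    rw [hi₀] at this
    simp [rowLength, show n - 1 < n by omega, nonpos_iff_eq_zero.1 this]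
  · simp [rowLength]
  · simpa [rowLength, hn] using hνk ⟨0, hn⟩

end LocalRule

section Pieri

variable {n k : ℕ}

theorem isHorizontalStrip_zero_iff {μ : Fin n → Fin (k + 1)} : IsHorizontalStrip μ 0 ↔ μ = 0 :=
  ⟨fun h => funext fun i => Fin.le_zero_iff.1 (h.1 i),
    by rintro rfl; exact ⟨le_rfl, fun _ _ _ => le_rfl⟩⟩

theorem card_mul_conjSsytCount_eq_two_mul {M : ℕ} (hM : M < k) {μ : Fin n → Fin (k + 1)}
    (hμ : Antitone μ) (hμ0 : ∃ i, μ i = 0) (ν : Fin n → Fin (k + 1)) :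
    #{l | IsHorizontalStrip μ l ∧ (Antitone ν ∧ IsVerticalStrip ν l)} * conjSsytCount M ν =
      2 * (#{ρ | (Antitone ρ ∧ IsVerticalStrip ρ μ) ∧ IsHorizontalStrip ρ ν} *
        conjSsytCount M ν) := by
  rcases eq_or_ne (conjSsytCount M ν) 0 with h0 | h0
  · simp [h0]
  by_cases hν : Antitone ν
  · have hρ : ∀ ρ, (Antitone ρ ∧ IsVerticalStrip ρ μ) ∧ IsHorizontalStrip ρ ν ↔
        IsVerticalStrip ρ μ ∧ IsHorizontalStrip ρ ν :=
      fun ρ => ⟨fun h => ⟨h.1.2, h.2⟩, fun h => ⟨⟨h.2.antitone_left, h.1⟩, h.2⟩⟩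
    have hνk : ∀ i, (ν i : ℕ) < k := fun i => (le_of_conjSsytCount_ne_zero hν h0 i).trans_lt hM
    simp only [hν, true_and, hρ, card_horizontal_vertical_eq_two_mul hμ hν hμ0 hνk, mul_assoc]
  · have hρ : ∀ ρ, ¬IsHorizontalStrip ρ ν := fun ρ h => hν h.antitone_right
    simp [hν, hρ]

theorem sum_isHorizontalStrip_conjSsytCount {M : ℕ} (hM : M ≤ k) {μ : Fin n → Fin (k + 1)}
    (hμ : Antitone μ) (hμ0 : ∃ i, μ i = 0) :
    ∑ l with IsHorizontalStrip μ l, conjSsytCount M l = 2 ^ M * conjSsytCount M μ := by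
  induction M generalizing μ with
  | zero =>
    simp only [conjSsytCount_zero, sum_ite_eq', mem_filter, mem_univ, true_and, pow_zero, one_mul,
      isHorizontalStrip_zero_iff]
  | succ M ih =>
    calc ∑ l with IsHorizontalStrip μ l, conjSsytCount (M + 1) l
        = ∑ l with IsHorizontalStrip μ l, ∑ ν with Antitone ν ∧ IsVerticalStrip ν l,
            conjSsytCount M ν :=
          sum_congr rfl fun l hl => conjSsytCount_succ (mem_filter.1 hl).2.antitone_right
      _ = ∑ ν, #{l | IsHorizontalStrip μ l ∧ (Antitone ν ∧ IsVerticalStrip ν l)} *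
            conjSsytCount M ν := sum_sum_filter_eq_sum_card_mul _ _ _
      _ = 2 * ∑ ν, #{ρ | (Antitone ρ ∧ IsVerticalStrip ρ μ) ∧ IsHorizontalStrip ρ ν} *
            conjSsytCount M ν := by
          rw [mul_sum]
          exact sum_congr rfl fun ν _ => card_mul_conjSsytCount_eq_two_mul (by omega) hμ hμ0 ν
      _ = 2 * ∑ ρ with Antitone ρ ∧ IsVerticalStrip ρ μ, ∑ ν with IsHorizontalStrip ρ ν,
            conjSsytCount M ν := by rw [sum_sum_filter_eq_sum_card_mul]
      _ = 2 * ∑ ρ with Antitone ρ ∧ IsVerticalStrip ρ μ, 2 ^ M * conjSsytCount M ρ := by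
          refine congrArg _ (sum_congr rfl fun ρ hρ => ?_)
          obtain ⟨hρ, hρμ⟩ := (mem_filter.1 hρ).2
          obtain ⟨i, hi⟩ := hμ0
          exact ih (by omega) hρ ⟨i, Fin.le_zero_iff.1 (hi ▸ hρμ.1 i)⟩
      _ = 2 ^ (M + 1) * conjSsytCount (M + 1) μ := by
          rw [← mul_sum, conjSsytCount_succ hμ, pow_succ]
          ring

end Pieri

theorem sum_ssytCount_mul_conjSsytCount {n k N : ℕ} (hN : N ≤ n) :
    ∑ l : Fin n → Fin (k + 1) with Antitone l, ssytCount N l * conjSsytCount k l = 2 ^ (N * k) := by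
  induction N with
  | zero =>
    simp only [ssytCount_zero, ite_mul, one_mul, zero_mul, sum_ite_eq', mem_filter, mem_univ,
      true_and, conjSsytCount, conj_eq_zero_iff.2 rfl, ssytCount_zero_shape, pow_zero]
    exact if_pos fun _ _ _ => le_rfl
  | succ N ih =>
    calc ∑ l with Antitone l, ssytCount (N + 1) l * conjSsytCount k l
        = ∑ l with Antitone l, ∑ m with IsHorizontalStrip m l, ssytCount N m * conjSsytCount k l :=
          sum_congr rfl fun l hl => by rw [ssytCount_succ (mem_filter.1 hl).2, sum_mul]
      _ = ∑ m with Antitone m, ∑ l with IsHorizontalStrip m l, ssytCount N m * conjSsytCount k l :=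
          sum_comm' fun l m => by
            simp only [mem_filter, mem_univ, true_and]
            exact ⟨fun h => ⟨h.2, h.2.antitone_left⟩, fun h => ⟨h.1.antitone_right, h.1⟩⟩
      _ = ∑ m with Antitone m, 2 ^ k * (ssytCount N m * conjSsytCount k m) := by
          refine sum_congr rfl fun m hm => ?_
          rw [← mul_sum]
          rcases eq_or_ne (ssytCount N m) 0 with h0 | h0
          · simp [h0]
          have hm := (mem_filter.1 hm).2
          rw [sum_isHorizontalStrip_conjSsytCount le_rfl hm
            ⟨⟨N, by omega⟩, eq_zero_of_ssytCount_ne_zero hm h0 le_rfl⟩]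
          ring
      _ = 2 ^ ((N + 1) * k) := by rw [← mul_sum, ih (by omega)]; ring

/-- Summing over all partitions `λ` inside an `n × k` rectangle, the number of SSYT of
shape `λ` with entries in `{1,…,n}` times the number of SSYT of the conjugate shape `λ'`
with entries in `{1,…,k}` equals `2^{nk}`. -/
theorem stmt13 (n k : ℕ) :
    ∑ l ∈ (Finset.univ.filter
        (fun l : Fin n → Fin (k + 1) => ∀ i j : Fin n, i ≤ j → l j ≤ l i)),
      (ssytFinset n (fun i : Fin n => (l i : ℕ))).card
        * (ssytFinset k (fun j : Fin k =>
            (Finset.univ.filter (fun i : Fin n => (j : ℕ) < (l i : ℕ))).card)).card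
      = 2 ^ (n * k) :=
  sum_ssytCount_mul_conjSsytCount le_rfl

end
end

section
/- Let n, k be positive integers and λ a partition inside an n×k rectangle, p ∈ {0,1}, a_i = λ_i + n - i + (p+1)/2. Then the rational expression M(λ,p) := (∏_{i=1}^{n} (2k+p+2i-2)! · (2a_i)) · (∏_{1≤i<j≤n} (a_i-a_j)(a_i+a_j)) / (∏_{i=1}^{n} (k+n-a_i+(p-1)/2)! (k+n+a_i+(p-1)/2)!) is a positive integer. -/
/-!
With `b_i = λ_i + n - i`, the quantity `M(λ, p)` is `|det B|` for the integer matrix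
`B_{ij} = C(2c + p, c + p + b_i) - C(2c + p, c + p + b_i + 1)`, `c = k + n - 1 - j`.
Clearing factorials, `B_{ij}` is a row factor times a column factor times
`∏_{t < j} (q_i - r_{jt})` with `q_i = b_i (b_i + p + 1)`: a monic polynomial of degree `j` in `q_i`.
So `det B` is, up to these factors, the Vandermonde determinant of the `q_i`, and
`q_i - q_j = (b_i - b_j)(b_i + b_j + p + 1)`. Since `b` is strictly decreasing, `M(λ, p) > 0`.
-/

open Finset Matrix Polynomial

section

variable {n : ℕ}

lemma choose_sub_choose_succ_mul_factorial {b c : ℕ} (p : ℕ) (hb : b ≤ c) :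
    ((Nat.choose (2 * c + p) (c + p + b) : ℚ) - Nat.choose (2 * c + p) (c + p + b + 1))
        * ((c - b).factorial * (c + b + p + 1).factorial)
      = (2 * c + p).factorial * (2 * b + p + 1) := by
  obtain ⟨d, rfl⟩ := Nat.exists_eq_add_of_le hb
  have hr : b + d + p + b ≤ 2 * (b + d) + p := by omega
  have hsub : 2 * (b + d) + p - (b + d + p + b) = d := by omega
  have hfac := Nat.choose_mul_factorial_mul_factorial hr
  have hsucc := Nat.choose_succ_right_eq (2 * (b + d) + p) (b + d + p + b)
  rw [hsub] at hfac hsucc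
  rw [Nat.add_sub_cancel_left, show b + d + b + p + 1 = b + d + p + b + 1 by ring,
    Nat.factorial_succ]
  have hfac' := congrArg (Nat.cast : ℕ → ℚ) hfac
  have hsucc' := congrArg (Nat.cast : ℕ → ℚ) hsucc
  push_cast at hfac' hsucc' ⊢
  linear_combination (2 * (b : ℚ) + p + 1) * hfac'
    - ((d.factorial : ℚ) * (b + d + p + b).factorial) * hsucc'

lemma choose_sub_choose_succ_mul_factorial_eq_prod {b c m : ℕ} (p : ℕ) (hb : b ≤ c + m) :
    ((Nat.choose (2 * c + p) (c + p + b) : ℚ) - Nat.choose (2 * c + p) (c + p + b + 1))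
        * ((c + m - b).factorial * (c + m + b + p + 1).factorial)
      = (2 * c + p).factorial * (2 * b + p + 1)
        * ∏ t ∈ range m, (((c + t + 1 : ℕ) : ℚ) - b) * (c + t + b + p + 2) := by
  rcases le_or_gt b c with hbc | hcb
  · clear hb
    induction m with
    | zero => simpa using choose_sub_choose_succ_mul_factorial p hbc
    | succ m ih =>
      rw [show c + (m + 1) - b = (c + m - b) + 1 by omega,
        show c + (m + 1) + b + p + 1 = (c + m + b + p + 1) + 1 by ring,
        Nat.factorial_succ, Nat.factorial_succ, prod_range_succ]
      push_cast [Nat.cast_sub (show b ≤ c + m by omega)] at ih ⊢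
      linear_combination ((c + m + 1 - b : ℚ) * (c + m + b + p + 2)) * ih
  · have hzero : b - c - 1 ∈ range m := mem_range.2 (by omega)
    rw [Nat.choose_eq_zero_of_lt (by omega), Nat.choose_eq_zero_of_lt (by omega),
      prod_eq_zero hzero (by rw [show c + (b - c - 1) + 1 = b by omega, sub_self, zero_mul])]
    simp

theorem det_prod_sub_eq_det_vandermonde {R : Type*} [CommRing R] (q : Fin n → R)
    (r : Fin n → ℕ → R) :
    det (of fun i j : Fin n => ∏ t ∈ range j, (q i - r j t)) = det (vandermonde q) := by
  rcases subsingleton_or_nontrivial R with hR | hR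
  · exact Subsingleton.elim _ _
  have hmonic (j : Fin n) : (∏ t ∈ range j, (X - C (r j t))).Monic :=
    monic_prod_of_monic _ _ fun t _ => monic_X_sub_C _
  rw [det_eval_matrixOfPolynomials_eq_det_vandermonde q (fun j => ∏ t ∈ range j, (X - C (r j t)))
    (fun j => by simp [natDegree_prod_of_monic _ _ (fun t _ => monic_X_sub_C (r j t))]) hmonic]
  simp [eval_prod]

lemma abs_det_vandermonde_mul_add (p : ℕ) {b : Fin n → ℕ} (hanti : Antitone b) :
    |det (vandermonde fun i => (b i : ℚ) * (b i + p + 1))|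
      = ∏ i, ∏ j ∈ Ioi i, ((b i : ℚ) - b j) * ((b i : ℚ) + b j + p + 1) := by
  rw [det_vandermonde, abs_prod]
  refine prod_congr rfl fun i _ => ?_
  rw [abs_prod]
  refine prod_congr rfl fun j hj => ?_
  have hji : (b j : ℚ) ≤ b i := by exact_mod_cast hanti (mem_Ioi.1 hj).le
  rw [show (b j : ℚ) * (b j + p + 1) - b i * (b i + p + 1)
      = -(((b i : ℚ) - b j) * ((b i : ℚ) + b j + p + 1)) by ring,
    abs_neg, abs_of_nonneg (mul_nonneg (sub_nonneg.2 hji) (by positivity))]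

def bcMatrix (k p : ℕ) (b : Fin n → ℕ) : Matrix (Fin n) (Fin n) ℤ :=
  of fun i j => (Nat.choose (2 * (k + j.rev) + p) (k + j.rev + p + b i) : ℤ)
    - Nat.choose (2 * (k + j.rev) + p) (k + j.rev + p + b i + 1)

/-- `M(λ, p)` in the coordinates `b i = λ_{i+1} + n - 1 - i`, so that `a_{i+1} = b i + (p + 1) / 2`. -/
def bcProduct (k p : ℕ) (b : Fin n → ℕ) : ℚ :=
  (∏ i : Fin n, ((2 * k + p + 2 * (i : ℕ)).factorial : ℚ) * (2 * (b i : ℚ) + p + 1))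
    * (∏ i : Fin n, ∏ j ∈ Ioi i, ((b i : ℚ) - b j) * ((b i : ℚ) + b j + p + 1))
    / ∏ i : Fin n, ((k + n - 1 - b i).factorial : ℚ) * ((k + n + b i + p).factorial : ℚ)

lemma cast_bcMatrix_apply (k p : ℕ) (b : Fin n → ℕ) (hb : ∀ i, b i < k + n) (i j : Fin n) :
    (bcMatrix k p b i j : ℚ)
      = (2 * (b i : ℚ) + p + 1)
          / ((k + n - 1 - b i).factorial * (k + n + b i + p).factorial)
        * ((-1) ^ (j : ℕ) * (2 * (k + j.rev) + p).factorial
          * ∏ t ∈ range j, ((b i : ℚ) * (b i + p + 1)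
            - ((k + j.rev + t + 1 : ℕ) : ℚ) * ((k + j.rev + t + 1 : ℕ) + p + 1))) := by
  have hcm : k + (j.rev : ℕ) + j = k + n - 1 := by rw [Fin.val_rev]; omega
  have hentry := choose_sub_choose_succ_mul_factorial_eq_prod (b := b i) (c := k + j.rev) (m := j) p
    (by specialize hb i; omega)
  rw [hcm, show k + n - 1 + b i + p + 1 = k + n + b i + p by omega] at hentry
  have hprod : ∏ t ∈ range j,
        (((k + j.rev + t + 1 : ℕ) : ℚ) - b i) * (((k + j.rev : ℕ) : ℚ) + t + b i + p + 2)
      = (-1) ^ (j : ℕ) * ∏ t ∈ range j, ((b i : ℚ) * (b i + p + 1)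
            - ((k + j.rev + t + 1 : ℕ) : ℚ) * ((k + j.rev + t + 1 : ℕ) + p + 1)) := by
    rw [show (-1 : ℚ) ^ (j : ℕ) = (-1) ^ #(range j) by rw [card_range], ← prod_neg]
    refine prod_congr rfl fun t _ => ?_
    push_cast
    ring
  rw [hprod] at hentry
  simp only [bcMatrix, of_apply]
  rw [div_mul_eq_mul_div, eq_div_iff (by positivity)]
  push_cast at hentry ⊢
  linear_combination hentry

lemma abs_det_bcMatrix (k p : ℕ) {b : Fin n → ℕ} (hanti : Antitone b) (hb : ∀ i, b i < k + n) :
    |((bcMatrix k p b).det : ℚ)| = bcProduct k p b := by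
  have hdet : ((bcMatrix k p b).det : ℚ) = (∏ i, (2 * (b i : ℚ) + p + 1)
          / ((k + n - 1 - b i).factorial * (k + n + b i + p).factorial))
      * ((∏ j : Fin n, (-1) ^ (j : ℕ) * ((2 * (k + j.rev) + p).factorial : ℚ))
        * det (vandermonde fun i => (b i : ℚ) * (b i + p + 1))) := by
    rw [← det_prod_sub_eq_det_vandermonde _
      fun j t => ((k + j.rev + t + 1 : ℕ) : ℚ) * ((k + j.rev + t + 1 : ℕ) + p + 1),
      ← det_mul_row, ← det_mul_column, Int.cast_det]
    congr 1
    ext i j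
    simp only [map_apply, of_apply]
    exact cast_bcMatrix_apply k p b hb i j
  have hcol : |∏ j : Fin n, (-1) ^ (j : ℕ) * ((2 * (k + j.rev) + p).factorial : ℚ)|
      = ∏ i : Fin n, ((2 * k + p + 2 * (i : ℕ)).factorial : ℚ) := by
    rw [abs_prod, ← Equiv.prod_comp Fin.revPerm]
    refine prod_congr rfl fun j _ => ?_
    rw [abs_mul, abs_pow, abs_neg, abs_one, one_pow, one_mul, Nat.abs_cast, Fin.revPerm_apply,
      Fin.rev_rev]
    ring_nf
  rw [hdet, abs_mul, abs_mul, hcol, abs_det_vandermonde_mul_add p hanti,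
    abs_of_nonneg (prod_nonneg fun i _ => by positivity)]
  simp only [bcProduct, prod_div_distrib, prod_mul_distrib]
  ring

lemma bcProduct_pos (k p : ℕ) {b : Fin n → ℕ} (hanti : StrictAnti b) : 0 < bcProduct k p b := by
  refine div_pos (mul_pos (prod_pos fun i _ => by positivity) (prod_pos fun i _ => ?_))
    (prod_pos fun i _ => by positivity)
  refine prod_pos fun j hj => mul_pos (sub_pos.2 ?_) (by positivity)
  exact_mod_cast hanti (mem_Ioi.1 hj)

theorem exists_nat_bcProduct_eq (k p : ℕ) {b : Fin n → ℕ} (hanti : StrictAnti b)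
    (hb : ∀ i, b i < k + n) : ∃ N : ℕ, 0 < N ∧ bcProduct k p b = N := by
  have hdet : bcProduct k p b = ((bcMatrix k p b).det.natAbs : ℚ) := by
    rw [Nat.cast_natAbs, Int.cast_abs, abs_det_bcMatrix k p hanti.antitone hb]
  refine ⟨(bcMatrix k p b).det.natAbs, ?_, hdet⟩
  exact_mod_cast hdet ▸ bcProduct_pos k p hanti

end

theorem stmt14_general (n k : ℕ) (p : ℕ)
    (l : Fin n → ℕ)
    (hl : ∀ i j : Fin n, i ≤ j → l j ≤ l i) (hbd : ∀ i, l i ≤ k) :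
    ∃ N : ℕ, 0 < N ∧
      (∏ i : Fin n, ((2 * k + p + 2 * (i : ℕ)).factorial : ℚ)
          * (2 * ((l i + (n - 1 - (i : ℕ))) : ℚ) + p + 1))
        * (∏ i : Fin n, ∏ j ∈ Finset.Ioi i,
            (((l i + (n - 1 - (i : ℕ))) : ℚ) - ((l j + (n - 1 - (j : ℕ))) : ℚ))
              * (((l i + (n - 1 - (i : ℕ))) : ℚ) + ((l j + (n - 1 - (j : ℕ))) : ℚ)
                  + p + 1))
        / (∏ i : Fin n, ((k - l i + (i : ℕ)).factorial : ℚ)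
            * ((k + 2 * n - 1 - (i : ℕ) + l i + p).factorial : ℚ))
      = (N : ℚ) := by
  have hanti : StrictAnti fun i : Fin n => l i + (n - 1 - i) := fun i j hij => by
    have := hl i j hij.le; have : (i : ℕ) < j := hij; dsimp only; omega
  obtain ⟨N, hN, hprod⟩ := exists_nat_bcProduct_eq k p hanti fun i => by
    have := hbd i; omega
  refine ⟨N, hN, Eq.trans ?_ hprod⟩
  have hcast (i : Fin n) : (((l i + (n - 1 - i) : ℕ)) : ℚ) = l i + (n - 1 - i) := by
    have := i.isLt
    rw [Nat.cast_add, Nat.cast_sub (show (i : ℕ) ≤ n - 1 by omega),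
      Nat.cast_sub (show 1 ≤ n by omega), Nat.cast_one]
  have hlow (i : Fin n) : k + n - 1 - (l i + (n - 1 - i)) = k - l i + i := by
    have := hbd i; omega
  have hhigh (i : Fin n) : k + n + (l i + (n - 1 - i)) + p = k + 2 * n - 1 - i + l i + p := by
    omega
  simp only [bcProduct, hcast, hlow, hhigh]

/-- Type `BC` product formula positivity: for `p ∈ {0,1}` and a partition `λ` inside
an `n × k` rectangle (`l i = λ_{i+1}`), with `a_i = λ_i + (n-i) + (p+1)/2` (writing
`b_i = λ_i + n - i`, so `2a_i = 2b_i + p + 1`, `a_i ± a_j = b_i ± b_j (+ p + 1)`,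
`k+n-a_i+(p-1)/2 = k - λ_i + i - 1` and `k+n+a_i+(p-1)/2 = k+n+b_i+p`), the rational
number `M(λ,p) = ∏_i (2k+p+2i-2)! (2a_i) ∏_{i<j}(a_i-a_j)(a_i+a_j)
  / ∏_i (k+n-a_i+(p-1)/2)! (k+n+a_i+(p-1)/2)!` is a positive integer. -/
theorem stmt14 (n k : ℕ) (hn : 0 < n) (hk : 0 < k) (p : ℕ) (hp : p ≤ 1)
    (l : Fin n → ℕ)
    (hl : ∀ i j : Fin n, i ≤ j → l j ≤ l i) (hbd : ∀ i, l i ≤ k) :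
    ∃ N : ℕ, 0 < N ∧
      (∏ i : Fin n, ((2 * k + p + 2 * (i : ℕ)).factorial : ℚ)
          * (2 * ((l i + (n - 1 - (i : ℕ))) : ℚ) + p + 1))
        * (∏ i : Fin n, ∏ j ∈ Finset.Ioi i,
            (((l i + (n - 1 - (i : ℕ))) : ℚ) - ((l j + (n - 1 - (j : ℕ))) : ℚ))
              * (((l i + (n - 1 - (i : ℕ))) : ℚ) + ((l j + (n - 1 - (j : ℕ))) : ℚ)
                  + p + 1))
        / (∏ i : Fin n, ((k - l i + (i : ℕ)).factorial : ℚ)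
            * ((k + 2 * n - 1 - (i : ℕ) + l i + p).factorial : ℚ))
      = (N : ℚ) :=
  stmt14_general n k p l hl hbd
end

section
/- Let n, k be positive integers, λ a partition inside an n×k rectangle, p ∈ {0,1}, and a_i = λ_i + n - i + p/2. Then the expression (∏_{i=1}^{n} (2k+2n-2i+p)!) · (∏_{1≤i<j≤n} (a_i-a_j)(a_i+a_j)) / (∏_{i=1}^{n} (k+n-1-a_i+p/2)! (k+n-1+a_i+p/2)!) equals the determinant det[ C(2(k+i)+p, k+i-j-λ_{n-j}) ]_{i,j=0}^{n-1} of binomial coefficients, and in particular is a nonnegative integer. -/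
open Finset

/-- Binomial coefficient with an integer lower argument, as a rational number:
`0` when the lower argument is negative. -/
def zchooseQ (a : ℕ) (b : ℤ) : ℚ := if 0 ≤ b then (a.choose b.toNat : ℚ) else 0

/-!
Reverse the rows and columns of the binomial matrix. With `M = k + n - 1`, `x_i = M - i` and
`b_j = λ_j + n - 1 - j`, entry `(i, j)` becomes `C(2x_i + p, x_i - b_j)`, and
`C(2x + p, x - b) (M - b)! (M + b + p)! = (2x + p)! ∏_{x < s ≤ M} (s - b)(s + b + p)`.
As `(s - b)(s + b + p) = s(s + p) - b(b + p)`, the product is a monic polynomial of degree `i`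
in `-b(b + p)`. After pulling out the row and column factors, the determinant is therefore a
Vandermonde determinant in the `-b_j(b_j + p)`, that is `∏_{i<j} (b_i - b_j)(b_i + b_j + p)`.
Integrality is clear from the matrix side, nonnegativity from the product side as the `b_i`
decrease.
-/

open Polynomial
open scoped Nat

theorem factorial_mul_prod_Ioc (m x d : ℕ) :
    (m ! : ℚ) * ∏ s ∈ Ioc x (x + d), ((s : ℚ) + m - x) = ((m + d)! : ℚ) := by
  induction d with
  | zero => simp
  | succ d ih =>
    rw [← add_assoc, prod_Ioc_succ_top (by omega), ← mul_assoc, ih, ← add_assoc,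
      Nat.factorial_succ]
    push_cast
    ring

theorem zchooseQ_mul_factorial_mul_factorial (x b d p : ℕ) (hb : b ≤ x + d) :
    zchooseQ (2 * x + p) ((x : ℤ) - b) * ((x + d - b)! * (x + d + b + p)! : ℚ)
      = (2 * x + p)! * ∏ s ∈ Ioc x (x + d), (((s : ℚ) - b) * (s + b + p)) := by
  rcases le_or_gt b x with hbx | hxb
  · have hlow : ((x - b)! : ℚ) * ∏ s ∈ Ioc x (x + d), ((s : ℚ) - b) = (x + d - b)! := by
      rw [show x + d - b = x - b + d by omega, ← factorial_mul_prod_Ioc (x - b) x d]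
      congr 1
      refine prod_congr rfl fun s _ => ?_
      push_cast [Nat.cast_sub hbx]
      ring
    have hhigh : ((x + b + p)! : ℚ) * ∏ s ∈ Ioc x (x + d), ((s : ℚ) + b + p)
        = (x + d + b + p)! := by
      rw [show x + d + b + p = x + b + p + d by omega, ← factorial_mul_prod_Ioc (x + b + p) x d]
      congr 1
      refine prod_congr rfl fun s _ => ?_
      push_cast
      ring
    rw [zchooseQ, if_pos (by omega), show ((x : ℤ) - b).toNat = x - b by omega,
      Nat.cast_choose ℚ (by omega : x - b ≤ 2 * x + p),
      show 2 * x + p - (x - b) = x + b + p by omega, ← hlow, ← hhigh, prod_mul_distrib]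
    field_simp
  · have hzero : ∏ s ∈ Ioc x (x + d), (((s : ℚ) - b) * (s + b + p)) = 0 := by
      apply prod_eq_zero (mem_Ioc.mpr ⟨hxb, hb⟩)
      ring
    rw [zchooseQ, if_neg (by omega), hzero]
    ring

theorem exists_zchooseQ_eq_intCast (a : ℕ) (b : ℤ) : ∃ z : ℤ, zchooseQ a b = z := by
  unfold zchooseQ
  split_ifs
  exacts [⟨_, (Int.cast_natCast _).symm⟩, ⟨0, Int.cast_zero.symm⟩]

theorem Matrix.exists_det_eq_intCast {ι : Type*} [Fintype ι] [DecidableEq ι]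
    (A : Matrix ι ι ℚ) (hA : ∀ i j, ∃ z : ℤ, A i j = z) : ∃ z : ℤ, A.det = z := by
  choose Z hZ using hA
  refine ⟨(Matrix.of Z).det, ?_⟩
  rw [← eq_intCast (Int.castRingHom ℚ), RingHom.map_det]
  congr 1
  ext i j
  simp [hZ]

theorem Matrix.det_of_mul_mul {ι R : Type*} [Fintype ι] [DecidableEq ι] [CommRing R]
    (r c : ι → R) (B : Matrix ι ι R) :
    (Matrix.of fun i j => r i * B i j * c j).det = (∏ i, r i) * (∏ j, c j) * B.det := by
  have hrow := Matrix.det_mul_column r B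
  have hcol := Matrix.det_mul_row c (Matrix.of fun i j => r i * B i j)
  simp only [Matrix.of_apply] at hcol
  rw [show (fun i j => r i * B i j * c j) = fun i j => c j * (r i * B i j) by
    ext; ring, hcol, hrow]
  ring

theorem Matrix.det_eval_of_monic {R : Type*} [CommRing R] {n : ℕ} (v : Fin n → R)
    (P : Fin n → R[X]) (hdeg : ∀ i, (P i).natDegree = i) (hmonic : ∀ i, (P i).Monic) :
    (Matrix.of fun i j => (P i).eval (v j)).det = ∏ i, ∏ j ∈ Ioi i, (v j - v i) := by
  rw [← Matrix.det_transpose, ← Matrix.det_vandermonde,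
    Matrix.det_eval_matrixOfPolynomials_eq_det_vandermonde v P hdeg hmonic]
  rfl

noncomputable def rowPoly (M p i : ℕ) : ℚ[X] :=
  ∏ s ∈ Ioc (M - i) M, (X + C ((s : ℚ) * (s + p)))

section rowPoly

variable (M p i : ℕ)

theorem rowPoly_monic : (rowPoly M p i).Monic :=
  monic_prod_of_monic _ _ fun _ _ => monic_X_add_C _

theorem natDegree_rowPoly (h : i ≤ M) : (rowPoly M p i).natDegree = i := by
  rw [rowPoly, natDegree_prod_of_monic _ _ fun _ _ => monic_X_add_C _]
  simp only [natDegree_X_add_C, sum_const, smul_eq_mul, mul_one, Nat.card_Ioc]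
  omega

theorem eval_rowPoly (b : ℚ) :
    (rowPoly M p i).eval (-(b * (b + p))) = ∏ s ∈ Ioc (M - i) M, ((s - b) * (s + b + p)) := by
  rw [rowPoly, eval_prod]
  refine prod_congr rfl fun s _ => ?_
  simp only [eval_add, eval_X, eval_C]
  ring

end rowPoly

section typeD

variable {n : ℕ} (k p : ℕ) (l : Fin n → ℕ)

/-- The paper's `a_i - p/2`, with rows indexed from `0`. -/
def shiftedPart (i : Fin n) : ℕ := l i + (n - 1 - i)

theorem cast_shiftedPart (i : Fin n) :
    (shiftedPart l i : ℚ) = l i + ((n : ℚ) - 1 - (i : ℕ)) := by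
  have := i.isLt
  rw [shiftedPart, Nat.cast_add, Nat.cast_sub (by omega), Nat.cast_sub (by omega), Nat.cast_one]

def binomialMatrix : Matrix (Fin n) (Fin n) ℚ :=
  Matrix.of fun i j =>
    zchooseQ (2 * (k + (i : ℕ)) + p) ((k : ℤ) + (i : ℕ) - (j : ℕ) - (l j.rev : ℤ))

theorem binomialMatrix_rev_rev {l : Fin n → ℕ} (i j : Fin n) (hj : l j ≤ k) :
    binomialMatrix k p l i.rev j.rev
      = (2 * k + 2 * (n - 1 - i) + p)!
        * (rowPoly (k + (n - 1)) p i).eval (-(shiftedPart l j * (shiftedPart l j + p : ℚ)))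
        * ((k - l j + j)! * (k + 2 * (n - 1) - j + l j + p)! : ℚ)⁻¹ := by
  have hi := i.isLt
  have hj' := j.isLt
  set x := k + (n - 1 - i) with hx
  set b := shiftedPart l j with hb
  unfold shiftedPart at hb
  have key := zchooseQ_mul_factorial_mul_factorial x b i p (by omega)
  rw [show x + i = k + (n - 1) by omega, show k + (n - 1) - b = k - l j + j by omega,
    show k + (n - 1) + b + p = k + 2 * (n - 1) - j + l j + p by omega,
    show 2 * x + p = 2 * k + 2 * (n - 1 - i) + p by omega] at key
  rw [eval_rowPoly, show k + (n - 1) - i = x by omega, eq_mul_inv_iff_mul_eq₀ (by positivity),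
    ← key]
  simp only [binomialMatrix, Matrix.of_apply, Fin.rev_rev, Fin.val_rev]
  have hrow : 2 * (k + (n - (i + 1))) + p = 2 * k + 2 * (n - 1 - i) + p := by omega
  have hcol : (k : ℤ) + (n - (i + 1) : ℕ) - (n - (j + 1) : ℕ) - l j = x - b := by omega
  rw [hrow, hcol]

theorem Antitone.shiftedPart {l : Fin n → ℕ} (hl : Antitone l) : Antitone (shiftedPart l) := by
  intro i j hij
  have := hl hij
  have : (i : ℕ) ≤ j := hij
  unfold _root_.shiftedPart
  omega

theorem det_binomialMatrix (hbd : ∀ i, l i ≤ k) :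
    (binomialMatrix k p l).det
      = (∏ i : Fin n, ((2 * k + 2 * (n - 1 - i) + p)! : ℚ))
        * (∏ j : Fin n, ((k - l j + j)! * (k + 2 * (n - 1) - j + l j + p)! : ℚ)⁻¹)
        * ∏ i : Fin n, ∏ j ∈ Ioi i, (((shiftedPart l i : ℚ) - shiftedPart l j)
            * (shiftedPart l i + shiftedPart l j + p)) := by
  set w : Fin n → ℚ := fun j => -(shiftedPart l j * (shiftedPart l j + p : ℚ))
  have hrev : (binomialMatrix k p l).submatrix Fin.revPerm Fin.revPerm
      = Matrix.of fun i j : Fin n => ((2 * k + 2 * (n - 1 - (i : ℕ)) + p)! : ℚ)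
          * Matrix.of (fun (i j : Fin n) => (rowPoly (k + (n - 1)) p i).eval (w j)) i j
          * ((k - l j + j)! * (k + 2 * (n - 1) - j + l j + p)! : ℚ)⁻¹ := by
    ext i j
    exact binomialMatrix_rev_rev k p i j (hbd j)
  rw [← Matrix.det_submatrix_equiv_self Fin.revPerm, hrev, Matrix.det_of_mul_mul,
    Matrix.det_eval_of_monic w (fun i => rowPoly (k + (n - 1)) p i)
      (fun i => natDegree_rowPoly _ _ _ (by omega)) (fun _ => rowPoly_monic _ _ _)]
  congr 1
  refine prod_congr rfl fun i _ => prod_congr rfl fun j _ => ?_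
  ring

def typeDQuotient : ℚ :=
  (∏ i : Fin n, ((2 * k + 2 * (n - 1 - i) + p)! : ℚ))
    * (∏ i : Fin n, ∏ j ∈ Ioi i,
        (((shiftedPart l i : ℚ) - shiftedPart l j) * (shiftedPart l i + shiftedPart l j + p)))
    / ∏ i : Fin n, ((k - l i + i)! * (k + 2 * (n - 1) - i + l i + p)! : ℚ)

theorem typeDQuotient_eq_det (hbd : ∀ i, l i ≤ k) :
    typeDQuotient k p l = (binomialMatrix k p l).det := by
  rw [typeDQuotient, det_binomialMatrix k p l hbd, div_eq_mul_inv, ← prod_inv_distrib]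
  ring

theorem typeDQuotient_nonneg (hl : Antitone l) : 0 ≤ typeDQuotient k p l := by
  refine div_nonneg (mul_nonneg (by positivity) ?_) (by positivity)
  refine prod_nonneg fun i _ => prod_nonneg fun j hj => mul_nonneg ?_ (by positivity)
  exact sub_nonneg.mpr (Nat.cast_le.mpr (hl.shiftedPart (mem_Ioi.mp hj).le))

end typeD

theorem stmt15_general (n k : ℕ) (p : ℕ)
    (l : Fin n → ℕ)
    (hl : ∀ i j : Fin n, i ≤ j → l j ≤ l i) (hbd : ∀ i, l i ≤ k) :
    (∏ i : Fin n, ((2 * k + 2 * (n - 1 - (i : ℕ)) + p).factorial : ℚ))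
      * (∏ i : Fin n, ∏ j ∈ Finset.Ioi i,
          (((l i + (n - 1 - (i : ℕ))) : ℚ) - ((l j + (n - 1 - (j : ℕ))) : ℚ))
            * (((l i + (n - 1 - (i : ℕ))) : ℚ) + ((l j + (n - 1 - (j : ℕ))) : ℚ) + p))
      / (∏ i : Fin n, ((k - l i + (i : ℕ)).factorial : ℚ)
          * ((k + 2 * (n - 1) - (i : ℕ) + l i + p).factorial : ℚ))
      = Matrix.det (Matrix.of fun i j : Fin n =>
          zchooseQ (2 * (k + (i : ℕ)) + p)
            ((k : ℤ) + (i : ℕ) - (j : ℕ) - (l j.rev : ℤ)))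
    ∧ ∃ N : ℕ,
      (∏ i : Fin n, ((2 * k + 2 * (n - 1 - (i : ℕ)) + p).factorial : ℚ))
        * (∏ i : Fin n, ∏ j ∈ Finset.Ioi i,
            (((l i + (n - 1 - (i : ℕ))) : ℚ) - ((l j + (n - 1 - (j : ℕ))) : ℚ))
              * (((l i + (n - 1 - (i : ℕ))) : ℚ) + ((l j + (n - 1 - (j : ℕ))) : ℚ) + p))
        / (∏ i : Fin n, ((k - l i + (i : ℕ)).factorial : ℚ)
            * ((k + 2 * (n - 1) - (i : ℕ) + l i + p).factorial : ℚ))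
        = (N : ℚ) := by
  simp only [← cast_shiftedPart]
  have hdet := typeDQuotient_eq_det k p l hbd
  have hnn := typeDQuotient_nonneg k p l hl
  obtain ⟨z, hz⟩ := Matrix.exists_det_eq_intCast (binomialMatrix k p l)
    fun i j => exists_zchooseQ_eq_intCast _ _
  rw [hdet, hz] at hnn
  refine ⟨hdet, z.toNat, hdet.trans ?_⟩
  rw [hz, ← Int.cast_natCast, Int.toNat_of_nonneg (by exact_mod_cast hnn)]

/-- Type `D` multiplicity formula at `q = 1`: for `p ∈ {0,1}` and a partition `λ` inside
an `n × k` rectangle (`l i = λ_{i+1}`), with `a_i = λ_i + n - i + p/2` (writing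
`b_i = λ_i + n - i`, so `a_i - a_j = b_i - b_j`, `a_i + a_j = b_i + b_j + p`,
`k+n-1-a_i+p/2 = k - λ_i + i - 1`, `k+n-1+a_i+p/2 = k+n-1+b_i+p`), the expression
`∏_i (2k+2n-2i+p)! ∏_{i<j}(a_i-a_j)(a_i+a_j) / ∏_i (k+n-1-a_i+p/2)! (k+n-1+a_i+p/2)!`
equals the determinant `det[ C(2(k+i)+p, k+i-j-λ_{n-j}) ]`, and in particular is a
nonnegative integer. -/
theorem stmt15 (n k : ℕ) (hn : 0 < n) (hk : 0 < k) (p : ℕ) (hp : p ≤ 1)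
    (l : Fin n → ℕ)
    (hl : ∀ i j : Fin n, i ≤ j → l j ≤ l i) (hbd : ∀ i, l i ≤ k) :
    (∏ i : Fin n, ((2 * k + 2 * (n - 1 - (i : ℕ)) + p).factorial : ℚ))
      * (∏ i : Fin n, ∏ j ∈ Finset.Ioi i,
          (((l i + (n - 1 - (i : ℕ))) : ℚ) - ((l j + (n - 1 - (j : ℕ))) : ℚ))
            * (((l i + (n - 1 - (i : ℕ))) : ℚ) + ((l j + (n - 1 - (j : ℕ))) : ℚ) + p))
      / (∏ i : Fin n, ((k - l i + (i : ℕ)).factorial : ℚ)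
          * ((k + 2 * (n - 1) - (i : ℕ) + l i + p).factorial : ℚ))
      = Matrix.det (Matrix.of fun i j : Fin n =>
          zchooseQ (2 * (k + (i : ℕ)) + p)
            ((k : ℤ) + (i : ℕ) - (j : ℕ) - (l j.rev : ℤ)))
    ∧ ∃ N : ℕ,
      (∏ i : Fin n, ((2 * k + 2 * (n - 1 - (i : ℕ)) + p).factorial : ℚ))
        * (∏ i : Fin n, ∏ j ∈ Finset.Ioi i,
            (((l i + (n - 1 - (i : ℕ))) : ℚ) - ((l j + (n - 1 - (j : ℕ))) : ℚ))
              * (((l i + (n - 1 - (i : ℕ))) : ℚ) + ((l j + (n - 1 - (j : ℕ))) : ℚ) + p))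
        / (∏ i : Fin n, ((k - l i + (i : ℕ)).factorial : ℚ)
            * ((k + 2 * (n - 1) - (i : ℕ) + l i + p).factorial : ℚ))
        = (N : ℚ) :=
  stmt15_general n k p l hl hbd
end
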